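/- arXiv:2408.01466 — 4 statements merged into one kernel-verified Lean document; each statement's English description precedes it below -/
import Mathlib

section
/- Let p ≥ 1, u ≥ 1 be real numbers, v > 2 a real number, δ ∈ ℂ \ {0}, 0 ≤ η ≤ 1 and 0 < τ ≤ 1. Then the function 𝒫(p,u,v)(z) = z − Σ_{s=2}^∞ (p^{s−1}/(E_{u,v}(p) Γ(u(s−1)+v))) z^s belongs to ℛ(δ,η,τ) if and only if (1/E_{u,v}(p)) [ (η/u²)(E_{u,v−2}(p) − 1/Γ(v−2)) + ((η(3−2v) + u(η+1))/u²)(E_{u,v−1}(p) − 1/Γ(v−1)) + (η(1−v)²/u² + (η+1)(1−v)/u + 1)(E_{u,v}(p) − 1/Γ(v)) ] ≤ τ|δ|. -/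
open Metric

/-- The Mittag-Leffler function `E_{u,v}(p) = ∑_{n=0}^∞ p^n / Γ(un+v)`. -/
noncomputable def mlE (u v p : ℝ) : ℝ := ∑' n : ℕ, p ^ n / Real.Gamma (u * n + v)

/-- The Mittag-Leffler-type Poisson distribution series
`𝒫(p,u,v)(z) = z - ∑_{s=2}^∞ (p^{s-1}/(E_{u,v}(p) Γ(u(s-1)+v))) z^s`. -/
noncomputable def mlP (p u v : ℝ) (z : ℂ) : ℂ :=
  z - ∑' s : ℕ, ((p ^ (s + 1) / (mlE u v p * Real.Gamma (u * (s + 1) + v)) : ℝ) : ℂ) * z ^ (s + 2)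

namespace Stmt5Aux

open Real Filter Topology

variable {p u v η τ : ℝ} {δ : ℂ}

lemma gamma_step {x u : ℝ} (hx : 2 ≤ x) (hu : 1 ≤ u) :
    x * Real.Gamma x ≤ Real.Gamma (x + u) := by
  have h1 : Real.Gamma (x + 1) = x * Real.Gamma x := Real.Gamma_add_one (by positivity)
  rw [← h1]
  rcases eq_or_lt_of_le hu with h | h
  · rw [← h]
  · exact le_of_lt (Real.Gamma_strictMonoOn_Ici (by simp; linarith) (by simp; linarith)
      (by linarith))

lemma gamma_arg_pos {u w : ℝ} (hu : 1 ≤ u) (hw : 0 < w) (m : ℕ) : (0:ℝ) < u * m + w := by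
  nlinarith [Nat.cast_nonneg (α := ℝ) m]

lemma aux_summable (u w q : ℝ) (hu : 1 ≤ u) (hw : 0 < w) (hq : 0 ≤ q) (k : ℕ) :
    Summable (fun n : ℕ => ((n : ℝ) + 1) ^ k * q ^ n / Real.Gamma (u * n + w)) := by
  apply summable_of_ratio_norm_eventually_le (r := 1/2) (by norm_num)
  obtain ⟨N, hN⟩ := exists_nat_ge ((2:ℝ) + 2 ^ (k + 1) * q)
  filter_upwards [eventually_ge_atTop N] with n hn
  have hnN : (N : ℝ) ≤ (n : ℝ) := by exact_mod_cast hn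
  have hun : (n : ℝ) ≤ u * n + w := by nlinarith [Nat.cast_nonneg (α := ℝ) n]
  set x := u * n + w with hxdef
  have hx2 : (2 : ℝ) ≤ x := by nlinarith [pow_nonneg (by norm_num : (0:ℝ) ≤ 2) (k+1)]
  have hxq : 2 ^ (k + 1) * q ≤ x := by nlinarith [pow_nonneg (by norm_num : (0:ℝ) ≤ 2) (k+1)]
  have hG : 0 < Real.Gamma x := Real.Gamma_pos_of_pos (by linarith)
  have hG' : 0 < Real.Gamma (x + u) := Real.Gamma_pos_of_pos (by linarith)
  have hkey : x * Real.Gamma x ≤ Real.Gamma (x + u) := gamma_step hx2 hu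
  have hx0 : (0 : ℝ) < x := by linarith
  have hterm : ∀ m : ℕ, (0:ℝ) ≤ ((m : ℝ) + 1) ^ k * q ^ m / Real.Gamma (u * m + w) := by
    intro m
    have := Real.Gamma_pos_of_pos (gamma_arg_pos hu hw m)
    positivity
  rw [Real.norm_of_nonneg (hterm (n+1)), Real.norm_of_nonneg (hterm n)]
  have harg : u * ((n : ℕ) + 1 : ℕ) + w = x + u := by push_cast; ring
  rw [harg]
  have hcast : ((((n:ℕ) + 1 : ℕ)) : ℝ) = (n : ℝ) + 1 := by push_cast; ring
  rw [hcast]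
  have hpow : ((n:ℝ) + 1 + 1) ^ k ≤ 2 ^ k * ((n:ℝ) + 1) ^ k := by
    rw [← mul_pow]
    apply pow_le_pow_left₀ (by positivity)
    nlinarith [Nat.cast_nonneg (α := ℝ) n]
  have hfac : 2 ^ (k + 1) * q / x ≤ 1 := (div_le_one hx0).mpr hxq
  calc ((n:ℝ) + 1 + 1) ^ k * q ^ (n + 1) / Real.Gamma (x + u)
      ≤ ((n:ℝ) + 1 + 1) ^ k * q ^ (n + 1) / (x * Real.Gamma x) := by
        apply div_le_div_of_nonneg_left (by positivity) (by positivity) hkey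
    _ ≤ (2 ^ k * ((n:ℝ) + 1) ^ k) * q ^ (n + 1) / (x * Real.Gamma x) := by
        gcongr
    _ = (2 ^ (k + 1) * q / x) * (1/2 * (((n:ℝ) + 1) ^ k * q ^ n / Real.Gamma x)) := by
        field_simp
        ring
    _ ≤ 1 * (1/2 * (((n:ℝ) + 1) ^ k * q ^ n / Real.Gamma x)) := by
        apply mul_le_mul_of_nonneg_right hfac
        positivity
    _ = 1/2 * (((n:ℝ) + 1) ^ k * q ^ n / Real.Gamma x) := one_mul _

lemma aux_summable2 (u w q : ℝ) (hu : 1 ≤ u) (hw : 0 < w) (hq : 0 ≤ q) (k : ℕ) :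
    Summable (fun n : ℕ => ((n : ℝ) + 2) ^ k * q ^ n / Real.Gamma (u * (n + 1) + w)) := by
  have h := (aux_summable u (w + u) q hu (by linarith) hq k).mul_left (2 ^ k)
  apply Summable.of_nonneg_of_le _ _ h
  · intro n
    have := Real.Gamma_pos_of_pos (gamma_arg_pos hu (by linarith : (0:ℝ) < w + u) (n+1))
    have harg : u * ((n:ℕ) + 1 : ℕ) + w = u * n + (w + u) := by push_cast; ring
    have : (0:ℝ) < Real.Gamma (u * ((n:ℝ) + 1) + w) := by
      apply Real.Gamma_pos_of_pos; nlinarith [Nat.cast_nonneg (α := ℝ) n]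
    positivity
  · intro n
    have hG : (0:ℝ) < Real.Gamma (u * ((n:ℝ) + 1) + w) := by
      apply Real.Gamma_pos_of_pos; nlinarith [Nat.cast_nonneg (α := ℝ) n]
    have harg : u * ((n:ℝ) + 1) + w = u * n + (w + u) := by ring
    rw [← harg, ← mul_div_assoc, ← mul_assoc]
    gcongr
    rw [← mul_pow]
    apply pow_le_pow_left₀ (by positivity)
    nlinarith [Nat.cast_nonneg (α := ℝ) n]

lemma summable_base {u w p : ℝ} (hu : 1 ≤ u) (hw : 0 < w) (hp : 0 ≤ p) :
    Summable (fun n : ℕ => p ^ n / Real.Gamma (u * n + w)) := by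
  have := aux_summable u w p hu hw hp 0
  simpa using this

lemma mlE_pos {u w p : ℝ} (hu : 1 ≤ u) (hw : 0 < w) (hp : 1 ≤ p) : 0 < mlE u w p := by
  unfold mlE
  apply Summable.tsum_pos (summable_base hu hw (by linarith)) _ 0
  · simp only [pow_zero, Nat.cast_zero, mul_zero, zero_add]
    have := Real.Gamma_pos_of_pos hw
    positivity
  · intro n
    have := Real.Gamma_pos_of_pos (gamma_arg_pos hu hw n)
    positivity

lemma mlE_shift {u w p : ℝ} (hu : 1 ≤ u) (hw : 0 < w) (hp : 1 ≤ p) :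
    ∑' n : ℕ, p ^ (n + 1) / Real.Gamma (u * (n + 1) + w) = mlE u w p - 1 / Real.Gamma w := by
  have hs := summable_base hu hw (by linarith : (0:ℝ) ≤ p)
  have h0 := Summable.tsum_eq_zero_add hs
  unfold mlE
  rw [h0]
  simp only [pow_zero, Nat.cast_zero, mul_zero, zero_add]
  rw [add_comm, add_sub_assoc, sub_self, add_zero]
  exact tsum_congr fun n => by push_cast; ring_nf

noncomputable def cc (p u v : ℝ) (s : ℕ) : ℝ :=
  p ^ (s + 1) / (mlE u v p * Real.Gamma (u * (s + 1) + v))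

lemma gamma_shift_pos (hu : 1 ≤ u) (hw : 0 < v) (s : ℕ) :
    (0:ℝ) < Real.Gamma (u * ((s:ℝ) + 1) + v) := by
  apply Real.Gamma_pos_of_pos; nlinarith [Nat.cast_nonneg (α := ℝ) s]

lemma cc_nonneg (hu : 1 ≤ u) (hv : 0 < v) (hp : 1 ≤ p) (s : ℕ) : 0 ≤ cc p u v s := by
  have h1 := gamma_shift_pos hu hv s
  have h2 := mlE_pos hu hv hp
  have hp0 : (0:ℝ) < p := by linarith
  unfold cc; positivity

lemma summable_pshift (hu : 1 ≤ u) {w : ℝ} (hw : 0 < w) (hp : 1 ≤ p) :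
    Summable (fun s : ℕ => p ^ (s + 1) / Real.Gamma (u * (s + 1) + w)) := by
  refine ((aux_summable2 u w p hu hw (by linarith) 0).mul_left p).congr fun s => ?_
  simp only [pow_zero, one_mul, pow_succ]
  ring

lemma cc_weighted_summable (hu : 1 ≤ u) (hv : 0 < v) (hp : 1 ≤ p) (k : ℕ) {R : ℝ}
    (hR : 0 ≤ R) : Summable (fun s : ℕ => ((s:ℝ) + 2) ^ k * cc p u v s * R ^ s) := by
  have hE := mlE_pos hu hv hp
  refine ((aux_summable2 u v (p * R) hu hv (by positivity) k).mul_left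
    (p / mlE u v p)).congr fun s => ?_
  have hG := gamma_shift_pos hu hv s
  unfold cc
  field_simp [mul_pow]
  ring

lemma term_ident (hu : 1 ≤ u) (hv : 2 < v) (s : ℕ) :
    η / u ^ 2 * (p ^ (s + 1) / Real.Gamma (u * (s + 1) + (v - 2)))
      + (η * (3 - 2 * v) + u * (η + 1)) / u ^ 2 *
          (p ^ (s + 1) / Real.Gamma (u * (s + 1) + (v - 1)))
      + (η * (1 - v) ^ 2 / u ^ 2 + (η + 1) * (1 - v) / u + 1) *
          (p ^ (s + 1) / Real.Gamma (u * (s + 1) + v))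
    = ((s:ℝ) + 2) * (1 + η * ((s:ℝ) + 1)) * (p ^ (s + 1) / Real.Gamma (u * (s + 1) + v)) := by
  have hy0 : (0:ℝ) < u * ((s:ℝ) + 1) + (v - 2) := by nlinarith [Nat.cast_nonneg (α := ℝ) s]
  set y : ℝ := u * ((s:ℝ) + 1) + (v - 2) with hy
  have hG : 0 < Real.Gamma y := Real.Gamma_pos_of_pos hy0
  have h1 : Real.Gamma (u * ((s:ℝ) + 1) + (v - 1)) = y * Real.Gamma y := by
    rw [show u * ((s:ℝ) + 1) + (v - 1) = y + 1 by rw [hy]; ring]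
    exact Real.Gamma_add_one (ne_of_gt hy0)
  have h2 : Real.Gamma (u * ((s:ℝ) + 1) + v) = (y + 1) * (y * Real.Gamma y) := by
    rw [show u * ((s:ℝ) + 1) + v = (y + 1) + 1 by rw [hy]; ring, ← h1,
      show u * ((s:ℝ) + 1) + (v - 1) = y + 1 by rw [hy]; ring]
    exact Real.Gamma_add_one (by positivity)
  rw [h1, h2]
  have hu0 : u ≠ 0 := by linarith
  have hy1 : y + 1 ≠ 0 := by positivity
  field_simp
  rw [hy]
  ring

lemma mlP_eq : mlP p u v = fun z : ℂ => z - ∑' s : ℕ, ((cc p u v s : ℝ) : ℂ) * z ^ (s + 2) :=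
  rfl

noncomputable def D1 (p u v : ℝ) (z : ℂ) : ℂ :=
  1 - ∑' s : ℕ, ((((s:ℝ) + 2) * cc p u v s : ℝ) : ℂ) * z ^ (s + 1)

noncomputable def D2 (p u v : ℝ) (z : ℂ) : ℂ :=
  - ∑' s : ℕ, ((((s:ℝ) + 2) * (((s:ℝ) + 1) * cc p u v s) : ℝ) : ℂ) * z ^ s

lemma hasDerivAt_mlP (hu : 1 ≤ u) (hv : 0 < v) (hp : 1 ≤ p) (z : ℂ) :
    HasDerivAt (mlP p u v) (D1 p u v z) z := by
  rw [mlP_eq]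
  unfold D1
  have hR : (0:ℝ) < ‖z‖ + 1 := by positivity
  have hsum : Summable (fun s : ℕ => ((s:ℝ) + 2) * cc p u v s * (‖z‖ + 1) ^ (s + 1)) := by
    refine ((cc_weighted_summable hu hv hp 1 hR.le).mul_right (‖z‖ + 1)).congr fun s => ?_
    simp only [pow_one, pow_succ]
    ring
  have ht : HasDerivAt (fun y : ℂ => ∑' s : ℕ, ((cc p u v s : ℝ) : ℂ) * y ^ (s + 2))
      (∑' s : ℕ, ((((s:ℝ) + 2) * cc p u v s : ℝ) : ℂ) * z ^ (s + 1)) z := by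
    apply hasDerivAt_tsum_of_isPreconnected hsum isOpen_ball
      ((convex_ball (0:ℂ) (‖z‖+1)).isPreconnected)
      (g := fun s y => ((cc p u v s : ℝ) : ℂ) * y ^ (s + 2))
      (g' := fun s y => ((((s:ℝ) + 2) * cc p u v s : ℝ) : ℂ) * y ^ (s + 1))
      (y₀ := 0)
    · intro s y hy
      have := (hasDerivAt_pow (s + 2) y).const_mul ((cc p u v s : ℝ) : ℂ)
      convert this using 1
      show _ = ((cc p u v s : ℝ) : ℂ) * ((((s:ℕ) + 2 : ℕ) : ℂ) * y ^ (s + 1))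
      push_cast
      ring
      rfl
    · intro s y hy
      rw [mem_ball_zero_iff] at hy
      have hccn := cc_nonneg hu hv hp s
      rw [norm_mul, norm_pow, Complex.norm_real, Real.norm_of_nonneg (by positivity)]
      exact mul_le_mul le_rfl (by gcongr) (by positivity) (by positivity)
    · exact mem_ball_zero_iff.mpr (by simpa using hR)
    · refine summable_zero.congr fun s => ?_
      simp
    · exact mem_ball_zero_iff.mpr (by linarith [norm_nonneg z])
  exact (hasDerivAt_id' (x := z)).sub ht

lemma hasDerivAt_D1 (hu : 1 ≤ u) (hv : 0 < v) (hp : 1 ≤ p) (z : ℂ) :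
    HasDerivAt (D1 p u v) (D2 p u v z) z := by
  unfold D1 D2
  have hR : (0:ℝ) < ‖z‖ + 1 := by positivity
  have hsum : Summable (fun s : ℕ => ((s:ℝ) + 2) ^ 2 * cc p u v s * (‖z‖ + 1) ^ s) :=
    cc_weighted_summable hu hv hp 2 hR.le
  have ht : HasDerivAt
      (fun y : ℂ => ∑' s : ℕ, ((((s:ℝ) + 2) * cc p u v s : ℝ) : ℂ) * y ^ (s + 1))
      (∑' s : ℕ, ((((s:ℝ) + 2) * (((s:ℝ) + 1) * cc p u v s) : ℝ) : ℂ) * z ^ s) z := by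
    apply hasDerivAt_tsum_of_isPreconnected hsum isOpen_ball
      ((convex_ball (0:ℂ) (‖z‖+1)).isPreconnected)
      (g := fun (s : ℕ) (y : ℂ) => ((((s:ℝ) + 2) * cc p u v s : ℝ) : ℂ) * y ^ (s + 1))
      (g' := fun (s : ℕ) (y : ℂ) => ((((s:ℝ) + 2) * (((s:ℝ) + 1) * cc p u v s) : ℝ) : ℂ) * y ^ s)
      (y₀ := 0)
    · intro s y hy
      have := (hasDerivAt_pow (s + 1) y).const_mul ((((s:ℝ) + 2) * cc p u v s : ℝ) : ℂ)
      convert this using 1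
      show _ = ((((s:ℝ) + 2) * cc p u v s : ℝ) : ℂ) * ((((s:ℕ) + 1 : ℕ) : ℂ) * y ^ s)
      push_cast
      ring
      rfl
    · intro s y hy
      rw [mem_ball_zero_iff] at hy
      have hccn := cc_nonneg hu hv hp s
      rw [norm_mul, norm_pow, Complex.norm_real, Real.norm_of_nonneg (by positivity)]
      have h1 : ((s:ℝ) + 2) * (((s:ℝ) + 1) * cc p u v s) ≤ ((s:ℝ) + 2) ^ 2 * cc p u v s := by
        nlinarith [Nat.cast_nonneg (α := ℝ) s]
      have h2 : ‖y‖ ^ s ≤ (‖z‖ + 1) ^ s := by gcongr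
      exact mul_le_mul h1 h2 (by positivity) (by positivity)
    · exact mem_ball_zero_iff.mpr (by simpa using hR)
    · refine summable_zero.congr fun s => ?_
      simp
    · exact mem_ball_zero_iff.mpr (by linarith [norm_nonneg z])
  have := (hasDerivAt_const z (1:ℂ)).sub ht
  rw [zero_sub] at this
  exact this

noncomputable def wt (η : ℝ) (s : ℕ) : ℝ := ((s:ℝ) + 2) * (1 + η * ((s:ℝ) + 1))

lemma wt_nonneg (hη0 : 0 ≤ η) (s : ℕ) : 0 ≤ wt η s := by
  unfold wt; positivity

lemma wt_le (hη1 : η ≤ 1) (s : ℕ) : wt η s ≤ ((s:ℝ) + 2) ^ 2 := by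
  unfold wt
  nlinarith [Nat.cast_nonneg (α := ℝ) s,
    mul_le_mul_of_nonneg_right hη1 (by positivity : (0:ℝ) ≤ (s:ℝ) + 1)]

/-- summability of the weighted coefficients, with an extra `R^(s+1)` for `0 ≤ R ≤ 1`. -/

lemma wt_cc_summable (hu : 1 ≤ u) (hv : 0 < v) (hp : 1 ≤ p) (hη0 : 0 ≤ η) (hη1 : η ≤ 1)
    {R : ℝ} (hR0 : 0 ≤ R) (hR1 : R ≤ 1) :
    Summable (fun s : ℕ => wt η s * cc p u v s * R ^ (s + 1)) := by
  apply Summable.of_nonneg_of_le _ _ (cc_weighted_summable hu hv hp 2 (zero_le_one (α := ℝ)))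
  · intro s
    have := cc_nonneg hu hv hp s
    have := wt_nonneg hη0 s
    positivity
  · intro s
    have h1 := wt_le hη1 s
    have h2 : R ^ (s + 1) ≤ 1 := pow_le_one₀ hR0 hR1
    have := cc_nonneg hu hv hp s
    have := wt_nonneg hη0 s
    calc wt η s * cc p u v s * R ^ (s + 1) ≤ wt η s * cc p u v s * 1 := by gcongr
      _ ≤ ((s:ℝ) + 2) ^ 2 * cc p u v s * 1 ^ s := by
          rw [one_pow, mul_one, mul_one]
          exact mul_le_mul_of_nonneg_right h1 ‹0 ≤ cc p u v s›

noncomputable def Phi (p u v η : ℝ) (z : ℂ) : ℂ :=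
  ∑' s : ℕ, ((wt η s * cc p u v s : ℝ) : ℂ) * z ^ (s + 1)

lemma expr_eq (hu : 1 ≤ u) (hv : 0 < v) (hp : 1 ≤ p) (hη0 : 0 ≤ η) (z : ℂ) :
    D1 p u v z + (η : ℂ) * z * D2 p u v z - 1 = - Phi p u v η z := by
  have hR : (0:ℝ) ≤ ‖z‖ := norm_nonneg z
  have hs1 : Summable (fun s : ℕ => ((((s:ℝ) + 2) * cc p u v s : ℝ) : ℂ) * z ^ (s + 1)) := by
    apply Summable.of_norm
    refine (((cc_weighted_summable hu hv hp 1 hR).mul_right ‖z‖)).congr fun s => ?_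
    have := cc_nonneg hu hv hp s
    rw [norm_mul, norm_pow, Complex.norm_real, Real.norm_of_nonneg (by positivity)]
    simp only [pow_one]
    rw [pow_succ]
    ring
  have hs2 : Summable (fun s : ℕ =>
      (η : ℂ) * z * (((((s:ℝ) + 2) * (((s:ℝ) + 1) * cc p u v s) : ℝ) : ℂ) * z ^ s)) := by
    apply Summable.of_norm
    apply Summable.of_nonneg_of_le (fun s => norm_nonneg _) _
      ((cc_weighted_summable hu hv hp 2 hR).mul_left (η * ‖z‖))
    intro s
    have hccn := cc_nonneg hu hv hp s
    rw [norm_mul, norm_mul, norm_mul, norm_pow, Complex.norm_real, Complex.norm_real,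
      Real.norm_of_nonneg hη0, Real.norm_of_nonneg (by positivity)]
    have h1 : ((s:ℝ) + 2) * (((s:ℝ) + 1) * cc p u v s) ≤ ((s:ℝ) + 2) ^ 2 * cc p u v s := by
      nlinarith [Nat.cast_nonneg (α := ℝ) s]
    calc η * ‖z‖ * (((s:ℝ) + 2) * (((s:ℝ) + 1) * cc p u v s) * ‖z‖ ^ s)
        ≤ η * ‖z‖ * (((s:ℝ) + 2) ^ 2 * cc p u v s * ‖z‖ ^ s) := by
          apply mul_le_mul_of_nonneg_left _ (by positivity)
          exact mul_le_mul_of_nonneg_right h1 (by positivity)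
      _ = η * ‖z‖ * (((s:ℝ) + 2) ^ 2 * cc p u v s * ‖z‖ ^ s) := rfl
  unfold D1 D2 Phi
  have h3 : (η : ℂ) * z * (- ∑' s : ℕ,
      ((((s:ℝ) + 2) * (((s:ℝ) + 1) * cc p u v s) : ℝ) : ℂ) * z ^ s)
      = - ∑' s : ℕ, (η : ℂ) * z *
          (((((s:ℝ) + 2) * (((s:ℝ) + 1) * cc p u v s) : ℝ) : ℂ) * z ^ s) := by
    rw [tsum_mul_left]
    ring
  rw [h3]
  have h4 : (1 : ℂ) - (∑' s : ℕ, ((((s:ℝ) + 2) * cc p u v s : ℝ) : ℂ) * z ^ (s + 1))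
      + - (∑' s : ℕ, (η : ℂ) * z *
          (((((s:ℝ) + 2) * (((s:ℝ) + 1) * cc p u v s) : ℝ) : ℂ) * z ^ s)) - 1
      = - ((∑' s : ℕ, ((((s:ℝ) + 2) * cc p u v s : ℝ) : ℂ) * z ^ (s + 1))
          + (∑' s : ℕ, (η : ℂ) * z *
            (((((s:ℝ) + 2) * (((s:ℝ) + 1) * cc p u v s) : ℝ) : ℂ) * z ^ s))) := by ring
  rw [h4, ← Summable.tsum_add hs1 hs2]
  congr 1
  refine tsum_congr fun s => ?_
  unfold wt
  push_cast
  ring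

lemma phi_real (r : ℝ) :
    Phi p u v η (r : ℂ) = ((∑' s : ℕ, wt η s * cc p u v s * r ^ (s + 1) : ℝ) : ℂ) := by
  unfold Phi
  rw [Complex.ofReal_tsum]
  exact tsum_congr fun s => by push_cast; ring

lemma main_iff (hu : 1 ≤ u) (hv : 0 < v) (hp : 1 ≤ p) (hδ : δ ≠ 0) (hη0 : 0 ≤ η)
    (hη1 : η ≤ 1) (hτ0 : 0 < τ) :
    (∀ z ∈ ball (0:ℂ) 1,
        ‖(1/δ) * (D1 p u v z + (η:ℂ) * z * D2 p u v z - 1)‖ < τ)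
      ↔ (∑' s : ℕ, wt η s * cc p u v s) ≤ τ * ‖δ‖ := by
  have hδ0 : 0 < ‖δ‖ := norm_pos_iff.mpr hδ
  have habs : ∀ X : ℂ, (‖(1/δ) * X‖ < τ ↔ ‖X‖ < τ * ‖δ‖) := by
    intro X
    rw [norm_mul, norm_div, norm_one, one_div, inv_mul_eq_div, div_lt_iff₀ hδ0]
  have hwsum : Summable (fun s : ℕ => wt η s * cc p u v s) := by
    have := wt_cc_summable hu hv hp hη0 hη1 (zero_le_one) le_rfl
    simpa using this
  constructor
  · intro h
    apply Summable.tsum_le_of_sum_le hwsum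
    intro F
    have hne : (𝓝[Set.Ioo (0:ℝ) 1] (1:ℝ)).NeBot := by
      apply mem_closure_iff_nhdsWithin_neBot.mp
      rw [closure_Ioo (by norm_num : (0:ℝ) ≠ 1)]
      exact ⟨by norm_num, le_rfl⟩
    have T : Tendsto (fun r : ℝ => ∑ s ∈ F, wt η s * cc p u v s * r ^ (s + 1))
        (𝓝[Set.Ioo (0:ℝ) 1] 1) (𝓝 (∑ s ∈ F, wt η s * cc p u v s)) := by
      apply tendsto_finset_sum
      intro s _
      have hc : Continuous (fun r : ℝ => wt η s * cc p u v s * r ^ (s + 1)) := by continuity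
      have h0 := hc.tendsto 1
      simp only [one_pow, mul_one] at h0
      exact h0.mono_left nhdsWithin_le_nhds
    apply le_of_tendsto T
    filter_upwards [self_mem_nhdsWithin] with r hr
    obtain ⟨hr0, hr1⟩ := hr
    have hz : (r:ℂ) ∈ ball (0:ℂ) 1 := by
      rw [mem_ball_zero_iff, Complex.norm_real, Real.norm_of_nonneg hr0.le]
      exact hr1
    have h2 := (habs _).mp (h _ hz)
    rw [expr_eq hu hv hp hη0, norm_neg, phi_real, Complex.norm_real,
      Real.norm_of_nonneg (tsum_nonneg fun s => by
        have := cc_nonneg hu hv hp s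
        have := wt_nonneg hη0 s
        positivity)] at h2
    refine le_trans (Summable.sum_le_tsum F (fun s _ => by
        have := cc_nonneg hu hv hp s
        have := wt_nonneg hη0 s
        positivity)
      (wt_cc_summable hu hv hp hη0 hη1 hr0.le hr1.le)) h2.le
  · intro hS z hz
    rw [habs, expr_eq hu hv hp hη0, norm_neg]
    have hz1 : ‖z‖ < 1 := mem_ball_zero_iff.mp hz
    have hnorms : Summable (fun s : ℕ => ‖((wt η s * cc p u v s : ℝ) : ℂ) * z ^ (s + 1)‖) := by
      refine (wt_cc_summable hu hv hp hη0 hη1 (norm_nonneg z) hz1.le).congr fun s => ?_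
      have := cc_nonneg hu hv hp s
      have := wt_nonneg hη0 s
      rw [norm_mul, norm_pow, Complex.norm_real, Real.norm_of_nonneg (by positivity)]
    have hb : ‖Phi p u v η z‖ ≤ ∑' s : ℕ, wt η s * cc p u v s * ‖z‖ ^ (s + 1) := by
      refine le_trans (norm_tsum_le_tsum_norm hnorms) (le_of_eq (tsum_congr fun s => ?_))
      have := cc_nonneg hu hv hp s
      have := wt_nonneg hη0 s
      rw [norm_mul, norm_pow, Complex.norm_real, Real.norm_of_nonneg (by positivity)]
    have hstep : (∑' s : ℕ, wt η s * cc p u v s * ‖z‖ ^ (s + 1))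
        ≤ (∑' s : ℕ, wt η s * cc p u v s) * ‖z‖ := by
      rw [← tsum_mul_right]
      apply Summable.tsum_le_tsum _ (by
          exact (wt_cc_summable hu hv hp hη0 hη1 (norm_nonneg z) hz1.le)) (hwsum.mul_right ‖z‖)
      intro s
      have hc := cc_nonneg hu hv hp s
      have hw := wt_nonneg hη0 s
      have : ‖z‖ ^ (s + 1) ≤ ‖z‖ := by
        calc ‖z‖ ^ (s + 1) ≤ ‖z‖ ^ 1 :=
          pow_le_pow_of_le_one (norm_nonneg z) hz1.le (by omega)
        _ = ‖z‖ := pow_one _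
      exact mul_le_mul_of_nonneg_left this (by positivity)
    have hfin : (∑' s : ℕ, wt η s * cc p u v s) * ‖z‖ < τ * ‖δ‖ := by
      rcases eq_or_lt_of_le (tsum_nonneg (fun s : ℕ => by
          have := cc_nonneg hu hv hp s
          have := wt_nonneg hη0 s
          positivity : ∀ s : ℕ, 0 ≤ wt η s * cc p u v s)) with hS0 | hS0
      · rw [← hS0, zero_mul]
        positivity
      · calc (∑' s : ℕ, wt η s * cc p u v s) * ‖z‖ < (∑' s : ℕ, wt η s * cc p u v s) :=
            mul_lt_of_lt_one_right hS0 hz1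
          _ ≤ τ * ‖δ‖ := hS
    exact lt_of_le_of_lt (hb.trans hstep) hfin

lemma sum_ident (hu : 1 ≤ u) (hv : 2 < v) (hp : 1 ≤ p) :
    ∑' s : ℕ, wt η s * cc p u v s
      = 1 / mlE u v p *
          (η / u ^ 2 * (mlE u (v - 2) p - 1 / Real.Gamma (v - 2)) +
            (η * (3 - 2 * v) + u * (η + 1)) / u ^ 2 *
              (mlE u (v - 1) p - 1 / Real.Gamma (v - 1)) +
            (η * (1 - v) ^ 2 / u ^ 2 + (η + 1) * (1 - v) / u + 1) *
              (mlE u v p - 1 / Real.Gamma v)) := by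
  unfold wt
  have hE := mlE_pos hu (by linarith : (0:ℝ) < v) hp
  have hA := (summable_pshift hu (by linarith : (0:ℝ) < v - 2) hp).mul_left (η / u ^ 2)
  have hB := (summable_pshift hu (by linarith : (0:ℝ) < v - 1) hp).mul_left
    ((η * (3 - 2 * v) + u * (η + 1)) / u ^ 2)
  have hC := (summable_pshift hu (by linarith : (0:ℝ) < v) hp).mul_left
    (η * (1 - v) ^ 2 / u ^ 2 + (η + 1) * (1 - v) / u + 1)
  have e1 : ∀ s : ℕ, ((s:ℝ) + 2) * (1 + η * ((s:ℝ) + 1)) * cc p u v s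
      = 1 / mlE u v p *
        (η / u ^ 2 * (p ^ (s + 1) / Real.Gamma (u * (s + 1) + (v - 2)))
          + (η * (3 - 2 * v) + u * (η + 1)) / u ^ 2 *
              (p ^ (s + 1) / Real.Gamma (u * (s + 1) + (v - 1)))
          + (η * (1 - v) ^ 2 / u ^ 2 + (η + 1) * (1 - v) / u + 1) *
              (p ^ (s + 1) / Real.Gamma (u * (s + 1) + v))) := by
    intro s
    rw [term_ident hu hv s]
    have hG := gamma_shift_pos hu (by linarith : (0:ℝ) < v) s
    unfold cc
    field_simp
  rw [tsum_congr e1, tsum_mul_left]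
  congr 1
  rw [Summable.tsum_add (hA.add hB) hC, Summable.tsum_add hA hB, tsum_mul_left, tsum_mul_left, tsum_mul_left,
    mlE_shift hu (by linarith : (0:ℝ) < v - 2) hp,
    mlE_shift hu (by linarith : (0:ℝ) < v - 1) hp,
    mlE_shift hu (by linarith : (0:ℝ) < v) hp]

end Stmt5Aux

/-- **Theorem 2.2**: `𝒫(p,u,v) ∈ ℛ(δ,η,τ)` if and only if the stated Mittag-Leffler
coefficient inequality holds. -/
theorem stmt_5 (p u v : ℝ) (hp : 1 ≤ p) (hu : 1 ≤ u) (hv : 2 < v)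
    (δ : ℂ) (hδ : δ ≠ 0) (η τ : ℝ) (hη0 : 0 ≤ η) (hη1 : η ≤ 1)
    (hτ0 : 0 < τ) (hτ1 : τ ≤ 1) :
    (∀ z ∈ ball (0 : ℂ) 1,
        ‖(1 / δ) *
          (deriv (mlP p u v) z + (η : ℂ) * z * deriv (deriv (mlP p u v)) z - 1)‖ < τ)
      ↔ 1 / mlE u v p *
          (η / u ^ 2 * (mlE u (v - 2) p - 1 / Real.Gamma (v - 2)) +
            (η * (3 - 2 * v) + u * (η + 1)) / u ^ 2 *
              (mlE u (v - 1) p - 1 / Real.Gamma (v - 1)) +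
            (η * (1 - v) ^ 2 / u ^ 2 + (η + 1) * (1 - v) / u + 1) *
              (mlE u v p - 1 / Real.Gamma v))
        ≤ τ * ‖δ‖ := by
  have hv0 : (0:ℝ) < v := by linarith
  have hd1 : deriv (mlP p u v) = Stmt5Aux.D1 p u v :=
    funext fun z => (Stmt5Aux.hasDerivAt_mlP hu hv0 hp z).deriv
  have hd2 : deriv (deriv (mlP p u v)) = Stmt5Aux.D2 p u v := by
    rw [hd1]
    exact funext fun z => (Stmt5Aux.hasDerivAt_D1 hu hv0 hp z).deriv
  rw [hd2, hd1, ← Stmt5Aux.sum_ident (η := η) hu hv hp]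
  exact Stmt5Aux.main_iff hu hv0 hp hδ hη0 hη1 hτ0
end

section
/- Let p ≥ 1, u ≥ 1 be real numbers, v > 2 a real number, δ ∈ ℂ \ {0} and 0 ≤ η ≤ 1. If (1/E_{u,v}(p)) [ (η/u²)(E_{u,v−2}(p) − 1/Γ(v−2)) + ((η(3−2v) + u(η+1))/u²)(E_{u,v−1}(p) − 1/Γ(v−1)) + (η(1−v)²/u² + (η+1)(1−v)/u + 1)(E_{u,v}(p) − 1/Γ(v)) ] ≤ |δ|, then the function ℱ(p,u,v)(z) = z + Σ_{s=2}^∞ (p^{s−1}/(E_{u,v}(p) Γ(u(s−1)+v))) z^s belongs to ℛ(η,δ). -/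
open Metric

/-- The Mittag-Leffler-type Poisson distribution series
`ℱ(p,u,v)(z) = z + ∑_{s=2}^∞ (p^{s-1}/(E_{u,v}(p) Γ(u(s-1)+v))) z^s`. -/
noncomputable def mlF (p u v : ℝ) (z : ℂ) : ℂ :=
  z + ∑' s : ℕ, ((p ^ (s + 1) / (mlE u v p * Real.Gamma (u * (s + 1) + v)) : ℝ) : ℂ) * z ^ (s + 2)

lemma key_summable {p u : ℝ} (hu : 1 ≤ u) (hp : 0 ≤ p) {v' : ℝ} (hv' : 0 < v')
    (f : ℕ → ℝ) (hf : ∀ n, |f n| ≤ ((n : ℝ) + 3) ^ 3) :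
    Summable (fun n : ℕ => f n * p ^ n / Real.Gamma (u * n + v')) := by
  rw [← summable_nat_add_iff 2]
  have hb : Summable (fun n : ℕ => 512 * 8 ^ n * p ^ (n + 2) / ((n+1).factorial : ℝ)) := by
    have h0 : Summable (fun n : ℕ => (512 * p ^ 2) * ((8 * p) ^ n / (n.factorial : ℝ))) :=
      (Real.summable_pow_div_factorial (8 * p)).mul_left _
    apply h0.of_nonneg_of_le (fun n => by positivity)
    intro n
    have key : 512 * 8 ^ n * p ^ (n + 2) / ((n+1).factorial : ℝ)
        = 512 * p ^ 2 * ((8*p) ^ n / ((n+1).factorial : ℝ)) := by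
      rw [mul_pow]; ring
    rw [key]
    gcongr
    omega
  apply Summable.of_norm_bounded hb
  intro n
  rw [Real.norm_eq_abs]
  have hΓpos : 0 < Real.Gamma (u * (↑(n+2)) + v') := by
    apply Real.Gamma_pos_of_pos; positivity
  rw [abs_div, abs_of_pos hΓpos]
  have hn0 : (0:ℝ) ≤ (n : ℝ) := Nat.cast_nonneg n
  -- Gamma lower bound: Γ(u(n+2)+v') ≥ Γ(n+2) = (n+1)!
  have hmono : (((n+1).factorial : ℝ)) ≤ Real.Gamma (u * (↑(n+2)) + v') := by
    have h1 : Real.Gamma ((n : ℝ) + 2) = (((n+1).factorial:ℝ)) := by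
      have := Real.Gamma_nat_eq_factorial (n+1)
      push_cast at this ⊢
      convert this using 2 <;> ring
    rw [← h1]
    apply (Real.Gamma_strictMonoOn_Ici.monotoneOn)
    · simp only [Set.mem_Ici]; linarith
    · simp only [Set.mem_Ici]; push_cast; nlinarith
    · push_cast; nlinarith
  have hnum : |f (n+2) * p ^ (n+2)| ≤ 512 * 8 ^ n * p ^ (n + 2) := by
    rw [abs_mul, abs_pow, abs_of_nonneg hp]
    gcongr
    calc |f (n+2)| ≤ ((↑(n+2):ℝ) + 3) ^ 3 := hf (n+2)
      _ ≤ (8 * 2 ^ n) ^ 3 := by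
          have h2n : (n : ℝ) + 1 ≤ 2 ^ n := by
            have : n + 1 ≤ 2 ^ n := Nat.lt_two_pow_self
            exact_mod_cast this
          gcongr
          push_cast; nlinarith
      _ = 512 * 8 ^ n := by
          rw [mul_pow, ← pow_mul]
          norm_num
          rw [show n * 3 = 3 * n by ring, pow_mul]
          norm_num
  calc |f (n+2) * p ^ (n+2)| / Real.Gamma (u * (↑(n+2)) + v')
      ≤ (512 * 8 ^ n * p ^ (n + 2)) / (((n+1).factorial : ℝ)) := by
        apply div_le_div₀ (by positivity) hnum (by positivity) hmono
    _ = 512 * 8 ^ n * p ^ (n + 2) / ((n+1).factorial : ℝ) := rfl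

lemma mlE_summable {p u : ℝ} (hu : 1 ≤ u) (hp : 0 ≤ p) {v' : ℝ} (hv' : 0 < v') :
    Summable (fun n : ℕ => p ^ n / Real.Gamma (u * n + v')) := by
  have := key_summable hu hp hv' (fun _ => 1) (fun n => by
    have h : (1:ℝ) ≤ (n:ℝ)+3 := by linarith [Nat.cast_nonneg (α := ℝ) n]
    rw [abs_one]
    calc (1:ℝ) = 1^3 := by norm_num
      _ ≤ ((n:ℝ)+3)^3 := by gcongr <;> norm_num)
  simpa using this

lemma mlE_pos {p u : ℝ} (hu : 1 ≤ u) (hp : 0 ≤ p) {v' : ℝ} (hv' : 0 < v') :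
    0 < mlE u v' p := by
  have hs := mlE_summable hu hp hv'
  apply Summable.tsum_pos hs (fun n => by positivity) 0
  simp only [pow_zero, Nat.cast_zero, mul_zero, zero_add]
  have := Real.Gamma_pos_of_pos hv'
  positivity

lemma mlE_tail {p u : ℝ} (hu : 1 ≤ u) (hp : 0 ≤ p) {v' : ℝ} (hv' : 0 < v') :
    ∑' s : ℕ, p ^ (s+1) / Real.Gamma (u * ((s : ℝ) + 1) + v')
      = mlE u v' p - 1 / Real.Gamma v' := by
  have hs := mlE_summable hu hp hv'
  have h0 := Summable.tsum_eq_zero_add hs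
  simp only [pow_zero, Nat.cast_zero, mul_zero, zero_add] at h0
  have hcongr : ∀ s : ℕ, p ^ (s+1) / Real.Gamma (u * (↑(s+1) : ℝ) + v')
      = p ^ (s+1) / Real.Gamma (u * ((s:ℝ) + 1) + v') := by
    intro s; push_cast; ring_nf
  rw [mlE, h0, ← tsum_congr hcongr]
  ring

lemma hasDerivAt_ps {b : ℕ → ℂ} {β : ℕ → ℝ} (m : ℕ → ℕ) (hmb : ∀ s, ‖b s‖ ≤ β s)
    (hm : ∀ s, m s ≤ s + 2) (hβ : Summable (fun s : ℕ => ((s : ℝ) + 3) * β s))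
    {z : ℂ} (hz : z ∈ ball (0 : ℂ) 1) :
    HasDerivAt (fun w : ℂ => ∑' s : ℕ, b s * w ^ (m s + 1))
      (∑' s : ℕ, b s * (((m s + 1 : ℕ) : ℂ) * z ^ (m s))) z := by
  apply hasDerivAt_tsum_of_isPreconnected hβ isOpen_ball
    (convex_ball (0:ℂ) 1).isPreconnected
    (g' := fun n y => b n * (((m n + 1 : ℕ) : ℂ) * y ^ (m n)))
    (fun n y _ => (hasDerivAt_pow (m n + 1) y).const_mul (b n)) ?_
    (mem_ball_self one_pos) ?_ hz
  · intro n y hy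
    rw [mem_ball_zero_iff] at hy
    have h0 : (0:ℝ) ≤ β n := le_trans (norm_nonneg _) (hmb n)
    rw [norm_mul, norm_mul, Complex.norm_natCast, norm_pow]
    calc ‖b n‖ * ((m n + 1 : ℕ) * ‖y‖ ^ (m n))
        ≤ β n * (((n:ℝ) + 3) * 1) := by
          apply mul_le_mul (hmb n) ?_ (by positivity) h0
          apply mul_le_mul ?_ (pow_le_one₀ (norm_nonneg y) hy.le) (by positivity) (by positivity)
          have := hm n
          push_cast
          exact_mod_cast by push_cast; linarith [(show ((m n : ℝ)) ≤ (n:ℝ) + 2 by exact_mod_cast this)]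
      _ = ((n:ℝ) + 3) * β n := by ring
  · apply summable_zero.congr
    intro n
    simp [pow_succ]

lemma shifted_summable {p u : ℝ} (hu : 1 ≤ u) (hp : 0 ≤ p) {v' : ℝ} (hv' : 0 < v')
    (g : ℕ → ℝ) (hg : ∀ n, |g n| ≤ ((n : ℝ) + 3) ^ 3) :
    Summable (fun s : ℕ => g s * (p ^ (s+1) / Real.Gamma (u * ((s:ℝ) + 1) + v'))) := by
  have hf : ∀ n : ℕ, |g (n - 1)| ≤ ((n : ℝ) + 3) ^ 3 := by
    intro n
    calc |g (n-1)| ≤ (((n-1 : ℕ) : ℝ) + 3) ^ 3 := hg (n-1)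
      _ ≤ ((n : ℝ) + 3) ^ 3 := by
          gcongr
          all_goals first
            | positivity
            | exact_mod_cast Nat.sub_le n 1
  have h := key_summable hu hp hv' (fun n => g (n-1)) hf
  have h2 := (summable_nat_add_iff 1).mpr h
  apply h2.congr
  intro s
  simp only [Nat.add_sub_cancel]
  push_cast
  ring

lemma csumC {b : ℕ → ℝ} (hb : Summable b) (hb0 : ∀ s, 0 ≤ b s) (m : ℕ → ℕ)
    {w : ℂ} (hw : ‖w‖ ≤ 1) :
    Summable (fun s : ℕ => ((b s : ℝ) : ℂ) * w ^ (m s)) := by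
  apply Summable.of_norm
  apply hb.of_nonneg_of_le (fun s => norm_nonneg _)
  intro s
  rw [norm_mul, Complex.norm_real, norm_pow, Real.norm_eq_abs, abs_of_nonneg (hb0 s)]
  calc b s * ‖w‖ ^ (m s) ≤ b s * 1 := by
        gcongr
        all_goals first
          | exact hb0 s
          | exact pow_le_one₀ (norm_nonneg w) hw
    _ = b s := mul_one _

set_option maxHeartbeats 2000000 in
/-- **Theorem 2.4**: a sufficient condition for `ℱ(p,u,v) ∈ ℛ(η,δ)`. -/
theorem stmt_7 (p u v : ℝ) (hp : 1 ≤ p) (hu : 1 ≤ u) (hv : 2 < v)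
    (δ : ℂ) (hδ : δ ≠ 0) (η : ℝ) (hη0 : 0 ≤ η) (hη1 : η ≤ 1)
    (hcond : 1 / mlE u v p *
        (η / u ^ 2 * (mlE u (v - 2) p - 1 / Real.Gamma (v - 2)) +
          (η * (3 - 2 * v) + u * (η + 1)) / u ^ 2 *
            (mlE u (v - 1) p - 1 / Real.Gamma (v - 1)) +
          (η * (1 - v) ^ 2 / u ^ 2 + (η + 1) * (1 - v) / u + 1) *
            (mlE u v p - 1 / Real.Gamma v))
        ≤ ‖δ‖) :
    ∀ z ∈ ball (0 : ℂ) 1,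
      0 < (1 + (1 / δ) *
        (deriv (mlF p u v) z + (η : ℂ) * z * deriv (deriv (mlF p u v)) z - 1)).re := by
  have hp0 : (0:ℝ) ≤ p := by linarith
  have hu0 : (0:ℝ) < u := by linarith
  have hv0 : (0:ℝ) < v := by linarith
  have hE : 0 < mlE u v p := mlE_pos hu hp0 hv0
  set c : ℕ → ℝ := fun s => p ^ (s + 1) / (mlE u v p * Real.Gamma (u * ((s:ℝ) + 1) + v))
    with hcdef
  have hΓs : ∀ s : ℕ, 0 < Real.Gamma (u * ((s:ℝ) + 1) + v) := by
    intro s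
    apply Real.Gamma_pos_of_pos
    have : (0:ℝ) ≤ (s:ℝ) := Nat.cast_nonneg s
    nlinarith
  have hc0 : ∀ s, 0 ≤ c s := fun s => by
    have := hΓs s; rw [hcdef]; positivity
  have hcpos : 0 < c 0 := by
    have := hΓs 0; rw [hcdef]; simp only []; positivity
  -- summability of weighted coefficient series
  have csum : ∀ (g : ℕ → ℝ), (∀ s, |g s| ≤ ((s:ℝ)+3)^3) →
      Summable (fun s : ℕ => g s * c s) := by
    intro g hg
    have h := (shifted_summable hu hp0 hv0 g hg).mul_right (1 / mlE u v p)
    apply h.congr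
    intro s
    rw [hcdef]
    rw [mul_one_div, mul_div_assoc, div_div,
      mul_comm (Real.Gamma (u * ((s:ℝ) + 1) + v)) (mlE u v p)]
  have hnn : ∀ s : ℕ, (0:ℝ) ≤ (s:ℝ) := fun s => Nat.cast_nonneg s
  have hb1 : ∀ s : ℕ, |((s:ℝ)+2)| ≤ ((s:ℝ)+3)^3 := by
    intro s
    rw [abs_of_nonneg (by positivity)]
    nlinarith [pow_nonneg (hnn s) 3, sq_nonneg (s:ℝ), hnn s]
  have hb13 : ∀ s : ℕ, |((s:ℝ)+3)| ≤ ((s:ℝ)+3)^3 := by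
    intro s
    rw [abs_of_nonneg (by positivity)]
    nlinarith [pow_nonneg (hnn s) 3, sq_nonneg (s:ℝ), hnn s]
  have hb2 : ∀ s : ℕ, |((s:ℝ)+2) * ((s:ℝ)+1)| ≤ ((s:ℝ)+3)^3 := by
    intro s
    rw [abs_of_nonneg (by positivity)]
    nlinarith [pow_nonneg (hnn s) 3, sq_nonneg (s:ℝ), hnn s]
  have hb23 : ∀ s : ℕ, |((s:ℝ)+3) * ((s:ℝ)+2)| ≤ ((s:ℝ)+3)^3 := by
    intro s
    rw [abs_of_nonneg (by positivity)]
    nlinarith [pow_nonneg (hnn s) 3, sq_nonneg (s:ℝ), hnn s]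
  have hbA : ∀ s : ℕ, |((s:ℝ)+2) * (1 + η * ((s:ℝ)+1))| ≤ ((s:ℝ)+3)^3 := by
    intro s
    have h1 : (0:ℝ) ≤ 1 + η * ((s:ℝ)+1) := by
      have := hnn s
      nlinarith
    rw [abs_of_nonneg (by positivity)]
    nlinarith [pow_nonneg (hnn s) 3, sq_nonneg (s:ℝ), hnn s,
      mul_nonneg (sub_nonneg.mpr hη1) (sq_nonneg (s:ℝ)),
      mul_nonneg (sub_nonneg.mpr hη1) (hnn s), sub_nonneg.mpr hη1]
  have Sum1 : Summable (fun s : ℕ => ((s:ℝ)+2) * c s) := csum _ hb1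
  have Sum13 : Summable (fun s : ℕ => ((s:ℝ)+3) * c s) := csum _ hb13
  have Sum2 : Summable (fun s : ℕ => ((s:ℝ)+2) * ((s:ℝ)+1) * c s) := csum _ hb2
  have Sum23 : Summable (fun s : ℕ => ((s:ℝ)+3) * (((s:ℝ)+2) * c s)) :=
    (csum _ hb23).congr (fun s => by ring)
  set a : ℕ → ℝ := fun s => ((s:ℝ)+2) * (1 + η * ((s:ℝ)+1)) * c s with hadef
  have ha0 : ∀ s, 0 ≤ a s := fun s => by
    rw [hadef]
    have h1 : (0:ℝ) ≤ 1 + η * ((s:ℝ)+1) := by nlinarith [hnn s]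
    have := hnn s; have := hc0 s
    positivity
  have SumA : Summable a := csum _ hbA
  -- derivatives
  have hmlF : mlF p u v = fun w : ℂ =>
      w + ∑' s : ℕ, ((c s : ℝ) : ℂ) * w ^ (s + 1 + 1) := rfl
  have hD1 : ∀ z ∈ ball (0:ℂ) 1, HasDerivAt (mlF p u v)
      (1 + ∑' s : ℕ, ((((s:ℝ)+2) * c s : ℝ) : ℂ) * z ^ (s+1)) z := by
    intro z hz
    have h := hasDerivAt_ps (b := fun s => ((c s : ℝ):ℂ)) (β := c) (fun s => s+1)
      (fun s => by rw [Complex.norm_real, Real.norm_eq_abs, abs_of_nonneg (hc0 s)])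
      (fun s => Nat.le_succ (s+1)) Sum13 hz
    have hval : (∑' s : ℕ, ((c s : ℝ):ℂ) * ((((s+1+1:ℕ)):ℂ) * z^(s+1)))
        = ∑' s : ℕ, ((((s:ℝ)+2) * c s : ℝ):ℂ) * z^(s+1) :=
      tsum_congr fun s => by push_cast; ring
    rw [hmlF]
    have h2 := (hasDerivAt_id z).add h
    rw [hval] at h2
    exact h2
  have hderiv1 : ∀ z ∈ ball (0:ℂ) 1, deriv (mlF p u v) z
      = 1 + ∑' s : ℕ, ((((s:ℝ)+2) * c s : ℝ):ℂ) * z^(s+1) := fun z hz => (hD1 z hz).deriv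
  have hD2 : ∀ z ∈ ball (0:ℂ) 1,
      HasDerivAt (fun w : ℂ => ∑' s : ℕ, ((((s:ℝ)+2)*c s : ℝ):ℂ) * w^(s+1))
      (∑' s : ℕ, ((((s:ℝ)+2)*((s:ℝ)+1)*c s : ℝ):ℂ) * z^s) z := by
    intro z hz
    have h := hasDerivAt_ps (b := fun s => ((((s:ℝ)+2)*c s : ℝ):ℂ))
      (β := fun s => ((s:ℝ)+2)*c s) (fun s => s)
      (fun s => by
        rw [Complex.norm_real, Real.norm_eq_abs,
          abs_of_nonneg (mul_nonneg (by linarith [hnn s]) (hc0 s))])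
      (fun s => Nat.le_add_right s 2) Sum23 hz
    have hval : (∑' s : ℕ, ((((s:ℝ)+2)*c s : ℝ):ℂ) * ((((s+1:ℕ)):ℂ) * z^s))
        = ∑' s : ℕ, ((((s:ℝ)+2)*((s:ℝ)+1)*c s : ℝ):ℂ) * z^s :=
      tsum_congr fun s => by push_cast; ring
    rw [hval] at h
    exact h
  have hderiv2 : ∀ z ∈ ball (0:ℂ) 1, deriv (deriv (mlF p u v)) z
      = ∑' s : ℕ, ((((s:ℝ)+2)*((s:ℝ)+1)*c s : ℝ):ℂ) * z^s := by
    intro z hz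
    have hev : deriv (mlF p u v) =ᶠ[nhds z]
        (fun w => 1 + ∑' s : ℕ, ((((s:ℝ)+2)*c s : ℝ):ℂ) * w^(s+1)) := by
      filter_upwards [isOpen_ball.mem_nhds hz] with w hw using hderiv1 w hw
    rw [hev.deriv_eq]
    exact ((hD2 z hz).const_add 1).deriv
  -- tail sums and the coefficient identity
  have hv2 : (0:ℝ) < v - 2 := by linarith
  have hv1 : (0:ℝ) < v - 1 := by linarith
  have hone : ∀ n : ℕ, |(1:ℝ)| ≤ ((n:ℝ)+3)^3 := by
    intro n
    rw [abs_one]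
    nlinarith [pow_nonneg (hnn n) 3, sq_nonneg (n:ℝ), hnn n]
  have St2 : Summable (fun s : ℕ => p^(s+1) / Real.Gamma (u*((s:ℝ)+1) + (v-2))) := by
    have := shifted_summable hu hp0 hv2 (fun _ => 1) hone
    simpa using this
  have St1 : Summable (fun s : ℕ => p^(s+1) / Real.Gamma (u*((s:ℝ)+1) + (v-1))) := by
    have := shifted_summable hu hp0 hv1 (fun _ => 1) hone
    simpa using this
  have St0 : Summable (fun s : ℕ => p^(s+1) / Real.Gamma (u*((s:ℝ)+1) + v)) := by
    have := shifted_summable hu hp0 hv0 (fun _ => 1) hone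
    simpa using this
  set A := η / u^2 with hAdef
  set B := (η*(3-2*v) + u*(η+1))/u^2 with hBdef
  set C := η*(1-v)^2/u^2 + (η+1)*(1-v)/u + 1 with hCdef
  have hkey : ∀ s : ℕ, a s = 1 / mlE u v p *
      (A * (p^(s+1) / Real.Gamma (u*((s:ℝ)+1) + (v-2)))
       + B * (p^(s+1) / Real.Gamma (u*((s:ℝ)+1) + (v-1)))
       + C * (p^(s+1) / Real.Gamma (u*((s:ℝ)+1) + v))) := by
    intro s
    have hx : (0:ℝ) < u*((s:ℝ)+1) + v - 2 := by nlinarith [hnn s]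
    have hx1 : (0:ℝ) < u*((s:ℝ)+1) + v - 1 := by linarith
    have hΓx : (0:ℝ) < Real.Gamma (u*((s:ℝ)+1) + (v-2)) :=
      Real.Gamma_pos_of_pos (by linarith)
    have e1 : Real.Gamma (u*((s:ℝ)+1) + (v-1))
        = (u*((s:ℝ)+1) + v - 2) * Real.Gamma (u*((s:ℝ)+1) + (v-2)) := by
      have h := Real.Gamma_add_one (s := u*((s:ℝ)+1) + (v-2)) (ne_of_gt (by linarith : (0:ℝ) < u*((s:ℝ)+1) + (v-2)))
      rw [show u*((s:ℝ)+1) + (v-1) = u*((s:ℝ)+1) + (v-2) + 1 by ring, h]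
      ring
    have e0 : Real.Gamma (u*((s:ℝ)+1) + v)
        = (u*((s:ℝ)+1) + v - 1) * ((u*((s:ℝ)+1) + v - 2)
            * Real.Gamma (u*((s:ℝ)+1) + (v-2))) := by
      have h := Real.Gamma_add_one (s := u*((s:ℝ)+1) + (v-1)) (ne_of_gt (by linarith : (0:ℝ) < u*((s:ℝ)+1) + (v-1)))
      rw [show u*((s:ℝ)+1) + v = u*((s:ℝ)+1) + (v-1) + 1 by ring, h, e1]
      ring
    have n1 := hx.ne'
    have n2 := hx1.ne'
    have n3 := hΓx.ne'
    have n4 := hE.ne'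
    have n5 := hu0.ne'
    rw [hadef, hcdef, hAdef, hBdef, hCdef]
    simp only []
    rw [e1, e0]
    have e : u*((s:ℝ)+1)+v-1 = (u*((s:ℝ)+1)+v-2)+1 := by ring
    rw [e] at n2 ⊢
    generalize hX : u*((s:ℝ)+1)+v-2 = X at n1 n2 ⊢
    have hv' : v = X + 2 - u*((s:ℝ)+1) := by linarith
    subst hv'
    field_simp
    ring
  have hS : (∑' s, a s) = 1 / mlE u v p *
      (A * (mlE u (v-2) p - 1/Real.Gamma (v-2)) + B * (mlE u (v-1) p - 1/Real.Gamma (v-1))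
        + C * (mlE u v p - 1/Real.Gamma v)) := by
    rw [tsum_congr hkey, tsum_mul_left]
    congr 1
    rw [Summable.tsum_add ((St2.mul_left A).add (St1.mul_left B)) (St0.mul_left C),
      Summable.tsum_add (St2.mul_left A) (St1.mul_left B),
      tsum_mul_left, tsum_mul_left, tsum_mul_left,
      mlE_tail hu hp0 hv2, mlE_tail hu hp0 hv1, mlE_tail hu hp0 hv0]
  have hSle : (∑' s, a s) ≤ ‖δ‖ := le_trans (le_of_eq hS) hcond
  -- final estimate
  intro z hz
  have hzn : ‖z‖ < 1 := mem_ball_zero_iff.mp hz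
  rw [hderiv1 z hz, hderiv2 z hz]
  set T : ℂ := ∑' s : ℕ, ((a s : ℝ):ℂ) * z^(s+1) with hTdef
  have hsum1C : Summable (fun s : ℕ => ((((s:ℝ)+2)*c s : ℝ):ℂ) * z^(s+1)) :=
    csumC Sum1 (fun s => mul_nonneg (by linarith [hnn s]) (hc0 s)) (fun s => s+1) hzn.le
  have hsum2C : Summable
      (fun s : ℕ => (η:ℂ) * z * (((((s:ℝ)+2)*((s:ℝ)+1)*c s : ℝ):ℂ) * z^s)) :=
    (csumC Sum2 (fun s => mul_nonneg
      (mul_nonneg (by linarith [hnn s]) (by linarith [hnn s])) (hc0 s))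
      (fun s => s) hzn.le).mul_left _
  have heq : ∀ s : ℕ, ((((s:ℝ)+2)*c s : ℝ):ℂ) * z^(s+1)
      + (η:ℂ) * z * (((((s:ℝ)+2)*((s:ℝ)+1)*c s : ℝ):ℂ) * z^s)
      = ((a s : ℝ):ℂ) * z^(s+1) := by
    intro s
    rw [hadef]
    push_cast
    ring
  have hT2 : T = (∑' s : ℕ, ((((s:ℝ)+2)*c s : ℝ):ℂ) * z^(s+1))
      + (η:ℂ) * z * (∑' s : ℕ, ((((s:ℝ)+2)*((s:ℝ)+1)*c s : ℝ):ℂ) * z^s) := by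
    rw [hTdef, ← tsum_congr heq, Summable.tsum_add hsum1C hsum2C, tsum_mul_left]
  have hcomb : (1 + ∑' s : ℕ, ((((s:ℝ)+2)*c s : ℝ):ℂ) * z^(s+1))
      + (η:ℂ) * z * (∑' s : ℕ, ((((s:ℝ)+2)*((s:ℝ)+1)*c s : ℝ):ℂ) * z^s) - 1 = T := by
    rw [hT2]
    ring
  rw [hcomb]
  have ha0pos : 0 < a 0 := by
    have h2 : a 0 = 2 * (1+η) * c 0 := by rw [hadef]; norm_num
    rw [h2]
    nlinarith [hcpos, hη0]
  have hnormle : ∀ s : ℕ, ‖((a s : ℝ):ℂ) * z^(s+1)‖ = a s * ‖z‖^(s+1) := by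
    intro s
    rw [norm_mul, Complex.norm_real, norm_pow, Real.norm_eq_abs, abs_of_nonneg (ha0 s)]
  have hTle : ‖T‖ ≤ ∑' s : ℕ, a s * ‖z‖^(s+1) := by
    have hns : Summable (fun s : ℕ => ‖((a s : ℝ):ℂ) * z^(s+1)‖) := by
      apply Summable.congr _ (fun s => (hnormle s).symm)
      apply SumA.of_nonneg_of_le (fun s => mul_nonneg (ha0 s) (pow_nonneg (norm_nonneg z) _))
      intro s
      calc a s * ‖z‖^(s+1) ≤ a s * 1 := by
            gcongr
            exact pow_le_one₀ (norm_nonneg z) hzn.le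
        _ = a s := mul_one _
    calc ‖T‖ ≤ ∑' s : ℕ, ‖((a s : ℝ):ℂ) * z^(s+1)‖ := norm_tsum_le_tsum_norm hns
      _ = ∑' s : ℕ, a s * ‖z‖^(s+1) := tsum_congr hnormle
  have hTlt : ‖T‖ < ‖δ‖ := by
    have h2 : (∑' s : ℕ, a s * ‖z‖^(s+1)) < ∑' s : ℕ, a s := by
      apply Summable.tsum_lt_tsum_of_nonneg
        (fun b => mul_nonneg (ha0 b) (pow_nonneg (norm_nonneg z) _))
        (fun b => by
          calc a b * ‖z‖^(b+1) ≤ a b * 1 := by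
                gcongr
                exact pow_le_one₀ (norm_nonneg z) hzn.le
            _ = a b := mul_one _)
        (i := 0) ?_ SumA
      calc a 0 * ‖z‖^(0+1) = a 0 * ‖z‖ := by rw [pow_one]
        _ < a 0 * 1 := by exact mul_lt_mul_of_pos_left hzn ha0pos
        _ = a 0 := mul_one _
    linarith
  have hδp : 0 < ‖δ‖ := norm_pos_iff.mpr hδ
  have hWlt : ‖1/δ * T‖ < 1 := by
    rw [norm_mul, norm_div, norm_one, div_mul_eq_mul_div, one_mul]
    rw [div_lt_one hδp]
    exact hTlt
  have hre := abs_le.mp (Complex.abs_re_le_norm (1/δ * T))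
  rw [Complex.add_re, Complex.one_re]
  linarith [hre.1, hWlt]
end

section
/- Let p ≥ 1, u ≥ 1 be real numbers and v > 2 a real number. If (1/E_{u,v}(p)) [ (1/u²)(E_{u,v−2}(p) − 1/Γ(v−2)) + ((3−2v)/u² + 2/u)(E_{u,v−1}(p) − 1/Γ(v−1)) + ((1−v)²/u² + 2(1−v)/u + 1)(E_{u,v}(p) − 1/Γ(v)) ] ≤ 1, then the function ℱ(p,u,v)(z) = z + Σ_{s=2}^∞ (p^{s−1}/(E_{u,v}(p) Γ(u(s−1)+v))) z^s is convex, i.e. Re{1 + z ℱ''(z)/ℱ'(z)} > 0 for all z in the open unit disc. -/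
open Metric


lemma ml_sq_bound (m : ℕ) : ((m : ℝ) + 4) ^ 2 ≤ 16 * 4 ^ m := by
  induction m with
  | zero => norm_num
  | succ k ih =>
    have h4 : (0:ℝ) < 4 ^ k := by positivity
    have hk : (0:ℝ) ≤ k := k.cast_nonneg
    push_cast
    push_cast at ih
    rw [pow_succ 4 k]
    nlinarith

lemma ml_gamma_lb {u w : ℝ} (hu : 1 ≤ u) (hw : 0 < w) (m : ℕ) :
    ((m.factorial : ℝ)) ≤ Real.Gamma (u * ((m : ℝ) + 3) + w) := by
  have hk : (0:ℝ) ≤ m := m.cast_nonneg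
  have h1 : Real.Gamma ((m : ℝ) + 3) = ((m + 2).factorial : ℝ) := by
    rw [show (m:ℝ) + 3 = ((m + 2 : ℕ) : ℝ) + 1 by push_cast; ring]
    exact Real.Gamma_nat_eq_factorial (m + 2)
  have h2 : Real.Gamma ((m : ℝ) + 3) ≤ Real.Gamma (u * ((m : ℝ) + 3) + w) := by
    apply Real.Gamma_strictMonoOn_Ici.monotoneOn
    · simp only [Set.mem_Ici]; linarith
    · simp only [Set.mem_Ici]; nlinarith
    · nlinarith
  have h3 : ((m.factorial : ℝ)) ≤ ((m + 2).factorial : ℝ) := by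
    exact_mod_cast Nat.factorial_le (by omega)
  linarith [h1 ▸ h2]

/-- Master summability lemma. -/
lemma ml_summable_master {p u w : ℝ} (hp : 1 ≤ p) (hu : 1 ≤ u) (hw : 0 < w) :
    Summable (fun n : ℕ => ((n : ℝ) + 1) ^ 2 * p ^ n / Real.Gamma (u * n + w)) := by
  have hp0 : (0:ℝ) < p := lt_of_lt_of_le one_pos hp
  have hΓpos : ∀ n : ℕ, 0 < Real.Gamma (u * n + w) := by
    intro n
    apply Real.Gamma_pos_of_pos
    have : (0:ℝ) ≤ u * n := by positivity
    linarith
  rw [← summable_nat_add_iff 3]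
  have hsum : Summable (fun m : ℕ => 16 * p ^ 3 * ((4 * p) ^ m / m.factorial)) :=
    (Real.summable_pow_div_factorial (4 * p)).mul_left _
  apply Summable.of_nonneg_of_le ?_ ?_ hsum
  · intro m
    have := (hΓpos (m + 3)).le
    positivity
  · intro m
    have hk : (0:ℝ) ≤ m := m.cast_nonneg
    have harg : u * ((m + 3 : ℕ) : ℝ) + w = u * ((m : ℝ) + 3) + w := by push_cast; ring
    have hΓ := ml_gamma_lb hu hw m
    have hfac : (0:ℝ) < (m.factorial : ℝ) := by exact_mod_cast m.factorial_pos
    have hΓ0 : (0:ℝ) < Real.Gamma (u * ((m : ℝ) + 3) + w) := lt_of_lt_of_le hfac hΓ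
    have key : (((m + 3 : ℕ) : ℝ) + 1) ^ 2 * p ^ (m + 3) ≤ 16 * p ^ 3 * (4 * p) ^ m := by
      have hb := ml_sq_bound m
      have h1 : (((m + 3 : ℕ) : ℝ) + 1) ^ 2 ≤ 16 * 4 ^ m := by push_cast; push_cast at hb; nlinarith
      calc (((m + 3 : ℕ) : ℝ) + 1) ^ 2 * p ^ (m + 3)
          ≤ (16 * 4 ^ m) * p ^ (m + 3) := by
            apply mul_le_mul_of_nonneg_right h1 (by positivity)
        _ = 16 * p ^ 3 * (4 * p) ^ m := by rw [mul_pow, pow_add]; ring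
    simp only [harg]
    calc (((m + 3 : ℕ) : ℝ) + 1) ^ 2 * p ^ (m + 3) / Real.Gamma (u * ((m : ℝ) + 3) + w)
        ≤ (16 * p ^ 3 * (4 * p) ^ m) / (m.factorial : ℝ) := by
          gcongr
      _ = 16 * p ^ 3 * ((4 * p) ^ m / (m.factorial : ℝ)) := by ring


lemma ml_gamma_pos {u w : ℝ} (hu : 1 ≤ u) (hw : 0 < w) (n : ℕ) :
    0 < Real.Gamma (u * n + w) := by
  apply Real.Gamma_pos_of_pos
  have : (0:ℝ) ≤ u * n := by positivity
  linarith

lemma ml_summable_simple {p u w : ℝ} (hp : 1 ≤ p) (hu : 1 ≤ u) (hw : 0 < w) :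
    Summable (fun n : ℕ => p ^ n / Real.Gamma (u * n + w)) := by
  have hp0 : (0:ℝ) < p := lt_of_lt_of_le one_pos hp
  apply Summable.of_nonneg_of_le ?_ ?_ (ml_summable_master hp hu hw)
  · intro n; exact div_nonneg (by positivity) (ml_gamma_pos hu hw n).le
  · intro n
    apply (div_le_div_iff_of_pos_right (ml_gamma_pos hu hw n)).mpr
    have h0 : (0:ℝ) ≤ (n:ℝ) := n.cast_nonneg
    nlinarith [pow_nonneg hp0.le n, sq_nonneg ((n:ℝ)), mul_nonneg (mul_nonneg h0 h0) (pow_nonneg hp0.le n), mul_nonneg h0 (pow_nonneg hp0.le n)]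

lemma ml_summable_shift {p u w : ℝ} (hp : 1 ≤ p) (hu : 1 ≤ u) (hw : 0 < w) :
    Summable (fun n : ℕ => p ^ (n + 1) / Real.Gamma (u * ((n : ℕ) + 1 : ℕ) + w)) :=
  (summable_nat_add_iff 1).mpr (ml_summable_simple hp hu hw)

lemma ml_summable_wshift {p u w : ℝ} (hp : 1 ≤ p) (hu : 1 ≤ u) (hw : 0 < w) :
    Summable (fun n : ℕ => ((n : ℝ) + 2) ^ 2 * p ^ (n + 1) / Real.Gamma (u * ((n : ℕ) + 1 : ℕ) + w)) := by
  have h := (summable_nat_add_iff 1).mpr (ml_summable_master hp hu hw)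
  apply h.congr
  intro n
  push_cast
  ring_nf


lemma ml_tail {p u w : ℝ} (hp : 1 ≤ p) (hu : 1 ≤ u) (hw : 0 < w) :
    mlE u w p - 1 / Real.Gamma w = ∑' n : ℕ, p ^ (n + 1) / Real.Gamma (u * ((n : ℕ) + 1 : ℕ) + w) := by
  unfold mlE
  rw [Summable.tsum_eq_zero_add (ml_summable_simple hp hu hw)]
  simp

lemma ml_termwise {p u v : ℝ} (hu : 1 ≤ u) (hv : 2 < v) (n : ℕ) :
    1 / u ^ 2 * (p ^ (n + 1) / Real.Gamma (u * ((n : ℕ) + 1 : ℕ) + (v - 2)))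
      + ((3 - 2 * v) / u ^ 2 + 2 / u) * (p ^ (n + 1) / Real.Gamma (u * ((n : ℕ) + 1 : ℕ) + (v - 1)))
      + ((1 - v) ^ 2 / u ^ 2 + 2 * (1 - v) / u + 1) * (p ^ (n + 1) / Real.Gamma (u * ((n : ℕ) + 1 : ℕ) + v))
    = ((n : ℝ) + 2) ^ 2 * p ^ (n + 1) / Real.Gamma (u * ((n : ℕ) + 1 : ℕ) + v) := by
  have h0 : (0:ℝ) ≤ (n:ℝ) := n.cast_nonneg
  have hun : (1:ℝ) ≤ u * ((n:ℝ) + 1) := by nlinarith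
  have e2 : u * (((n : ℕ) + 1 : ℕ) : ℝ) + (v - 2) = u * ((n:ℝ) + 1) + v - 2 := by push_cast; ring
  have e1 : u * (((n : ℕ) + 1 : ℕ) : ℝ) + (v - 1) = u * ((n:ℝ) + 1) + v - 2 + 1 := by push_cast; ring
  have e0 : u * (((n : ℕ) + 1 : ℕ) : ℝ) + v = u * ((n:ℝ) + 1) + v - 2 + 1 + 1 := by push_cast; ring
  have hy2 : (0:ℝ) < u * ((n:ℝ) + 1) + v - 2 := by linarith
  have hy1 : (0:ℝ) < u * ((n:ℝ) + 1) + v - 2 + 1 := by linarith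
  have hG2 : (0:ℝ) < Real.Gamma (u * ((n:ℝ) + 1) + v - 2) := Real.Gamma_pos_of_pos hy2
  rw [e2, e1, e0, Real.Gamma_add_one hy1.ne', Real.Gamma_add_one hy2.ne']
  have hu0 : u ≠ 0 := by positivity
  field_simp
  ring

lemma ml_identity {p u v : ℝ} (hp : 1 ≤ p) (hu : 1 ≤ u) (hv : 2 < v) :
    1 / u ^ 2 * (mlE u (v - 2) p - 1 / Real.Gamma (v - 2)) +
      ((3 - 2 * v) / u ^ 2 + 2 / u) * (mlE u (v - 1) p - 1 / Real.Gamma (v - 1)) +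
      ((1 - v) ^ 2 / u ^ 2 + 2 * (1 - v) / u + 1) * (mlE u v p - 1 / Real.Gamma v)
    = ∑' n : ℕ, ((n : ℝ) + 2) ^ 2 * p ^ (n + 1) / Real.Gamma (u * ((n : ℕ) + 1 : ℕ) + v) := by
  have hv2 : (0:ℝ) < v - 2 := by linarith
  have hv1 : (0:ℝ) < v - 1 := by linarith
  have hv0 : (0:ℝ) < v := by linarith
  rw [ml_tail hp hu hv2, ml_tail hp hu hv1, ml_tail hp hu hv0]
  rw [← tsum_mul_left, ← tsum_mul_left, ← tsum_mul_left]
  rw [← Summable.tsum_add ((ml_summable_shift hp hu hv2).mul_left _)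
        ((ml_summable_shift hp hu hv1).mul_left _),
      ← Summable.tsum_add (Summable.add ((ml_summable_shift hp hu hv2).mul_left _)
        ((ml_summable_shift hp hu hv1).mul_left _)) ((ml_summable_shift hp hu hv0).mul_left _)]
  exact tsum_congr (fun n => ml_termwise hu hv n)

lemma ml_norm_aux (n : ℕ) : ‖((n:ℂ)+2)‖ = (n:ℝ)+2 := by
  rw [show ((n:ℂ)+2) = ((n+2:ℕ):ℂ) by push_cast; ring, Complex.norm_natCast]
  push_cast; ring

lemma ml_norm_term1 (qn : ℝ) (hq : 0 ≤ qn) (n : ℕ) (y : ℂ) :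
    ‖((qn : ℝ):ℂ) * (((n:ℂ)+2) * y^(n+1))‖ = ((n:ℝ)+2) * qn * ‖y‖^(n+1) := by
  rw [norm_mul, norm_mul, norm_pow, Complex.norm_real, Real.norm_eq_abs,
    abs_of_nonneg hq, ml_norm_aux]
  ring

lemma ml_norm_term2 (qn : ℝ) (hq : 0 ≤ qn) (n : ℕ) (y : ℂ) :
    ‖((qn : ℝ):ℂ) * (((n:ℂ)+2) * (((n:ℂ)+1) * y^n))‖ = ((n:ℝ)+2) * ((n:ℝ)+1) * qn * ‖y‖^n := by
  rw [norm_mul, norm_mul, norm_mul, norm_pow, Complex.norm_real, Real.norm_eq_abs,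
    abs_of_nonneg hq, ml_norm_aux, show ((n:ℂ)+1) = ((n+1:ℕ):ℂ) by push_cast; ring,
    Complex.norm_natCast]
  push_cast; ring

lemma ml_hasDerivAt_f (q : ℕ → ℝ) (hq : ∀ n, 0 ≤ q n)
    (hQ : Summable fun n : ℕ => ((n:ℝ)+2)^2 * q n) {z : ℂ} (hz : z ∈ ball (0:ℂ) 1) :
    HasDerivAt (fun y : ℂ => y + ∑' n : ℕ, ((q n : ℝ):ℂ) * y^(n+2))
      (1 + ∑' n : ℕ, ((q n : ℝ):ℂ) * (((n:ℂ)+2) * z^(n+1))) z := by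
  have hsum : Summable (fun n : ℕ => ((n:ℝ)+2) * q n) := by
    apply Summable.of_nonneg_of_le (fun n => by have := hq n; positivity) ?_ hQ
    intro n
    have h0 : (0:ℝ) ≤ n := n.cast_nonneg
    nlinarith [hq n, mul_nonneg h0 (hq n), mul_nonneg (mul_nonneg h0 h0) (hq n)]
  have W : HasDerivAt (fun y : ℂ => ∑' n : ℕ, ((q n:ℝ):ℂ) * y^(n+2))
      (∑' n : ℕ, ((q n:ℝ):ℂ) * (((n:ℂ)+2) * z^(n+1))) z := by
    apply hasDerivAt_tsum_of_isPreconnected hsum isOpen_ball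
      (convex_ball (0:ℂ) 1).isPreconnected ?_ ?_ (mem_ball_self one_pos) ?_ hz
    · intro n y _
      have h := (hasDerivAt_pow (n+2) y).const_mul ((q n:ℝ):ℂ)
      convert h using 1
      · rfl
      push_cast
      ring
    · intro n y hy
      rw [mem_ball_zero_iff] at hy
      rw [ml_norm_term1 (q n) (hq n) n y]
      have h0 : (0:ℝ) ≤ n := n.cast_nonneg
      have hqn := hq n
      have h1 : ‖y‖^(n+1) ≤ 1 := pow_le_one₀ (norm_nonneg y) hy.le
      calc ((n:ℝ)+2) * q n * ‖y‖^(n+1) ≤ ((n:ℝ)+2) * q n * 1 :=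
            mul_le_mul_of_nonneg_left h1 (by positivity)
        _ = ((n:ℝ)+2) * q n := by ring
    · have he : (fun n : ℕ => ((q n:ℝ):ℂ) * (0:ℂ)^(n+2)) = fun _ => 0 := by
        funext n; rw [zero_pow (by omega : n+2 ≠ 0), mul_zero]
      rw [he]; exact summable_zero
  exact (hasDerivAt_id' z).add W

lemma ml_hasDerivAt_g (q : ℕ → ℝ) (hq : ∀ n, 0 ≤ q n)
    (hQ : Summable fun n : ℕ => ((n:ℝ)+2)^2 * q n) {z : ℂ} (hz : z ∈ ball (0:ℂ) 1) :
    HasDerivAt (fun y : ℂ => 1 + ∑' n : ℕ, ((q n : ℝ):ℂ) * (((n:ℂ)+2) * y^(n+1)))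
      (∑' n : ℕ, ((q n : ℝ):ℂ) * (((n:ℂ)+2) * (((n:ℂ)+1) * z^n))) z := by
  have W : HasDerivAt (fun y : ℂ => ∑' n : ℕ, ((q n:ℝ):ℂ) * (((n:ℂ)+2) * y^(n+1)))
      (∑' n : ℕ, ((q n:ℝ):ℂ) * (((n:ℂ)+2) * (((n:ℂ)+1) * z^n))) z := by
    apply hasDerivAt_tsum_of_isPreconnected hQ isOpen_ball
      (convex_ball (0:ℂ) 1).isPreconnected ?_ ?_ (mem_ball_self one_pos) ?_ hz
    · intro n y _
      have hfun : (fun y : ℂ => ((q n:ℝ):ℂ) * (((n:ℂ)+2) * y^(n+1)))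
          = fun y : ℂ => (((q n:ℝ):ℂ) * ((n:ℂ)+2)) * y^(n+1) := by
        funext y; ring
      rw [hfun]
      have h := (hasDerivAt_pow (n+1) y).const_mul (((q n:ℝ):ℂ) * ((n:ℂ)+2))
      convert h using 1
      · rfl
      push_cast
      ring
    · intro n y hy
      rw [mem_ball_zero_iff] at hy
      rw [ml_norm_term2 (q n) (hq n) n y]
      have h0 : (0:ℝ) ≤ n := n.cast_nonneg
      have h1 : ‖y‖^n ≤ 1 := pow_le_one₀ (norm_nonneg y) hy.le
      have h2 : (0:ℝ) ≤ ‖y‖^n := by positivity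
      have hqn := hq n
      have h3 : ((n:ℝ)+2) * ((n:ℝ)+1) * q n * ‖y‖^n ≤ ((n:ℝ)+2) * ((n:ℝ)+1) * q n :=
        le_of_le_of_eq (mul_le_mul_of_nonneg_left h1 (by positivity)) (mul_one _)
      nlinarith [mul_nonneg h0 hqn, hqn]
    · have he : (fun n : ℕ => ((q n:ℝ):ℂ) * (((n:ℂ)+2) * (0:ℂ)^(n+1))) = fun _ => 0 := by
        funext n; rw [zero_pow (by omega : n+1 ≠ 0), mul_zero, mul_zero]
      rw [he]; exact summable_zero
  simpa using W

lemma ml_convex (q : ℕ → ℝ) (hq : ∀ n, 0 ≤ q n)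
    (hQ : Summable fun n : ℕ => ((n:ℝ)+2)^2 * q n)
    (hK : ∑' n : ℕ, ((n:ℝ)+2)^2 * q n ≤ 1) :
    ∀ z ∈ ball (0:ℂ) 1,
      0 < (1 + z * deriv (deriv (fun y : ℂ => y + ∑' n : ℕ, ((q n : ℝ):ℂ) * y^(n+2))) z /
        deriv (fun y : ℂ => y + ∑' n : ℕ, ((q n : ℝ):ℂ) * y^(n+2)) z).re := by
  intro z hz
  have hz1 : ‖z‖ < 1 := mem_ball_zero_iff.mp hz
  set G : ℂ → ℂ := fun y => 1 + ∑' n : ℕ, ((q n : ℝ):ℂ) * (((n:ℂ)+2) * y^(n+1)) with hGdef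
  set H : ℂ → ℂ := fun y => ∑' n : ℕ, ((q n : ℝ):ℂ) * (((n:ℂ)+2) * (((n:ℂ)+1) * y^n)) with hHdef
  have hd1 : ∀ y ∈ ball (0:ℂ) 1,
      deriv (fun y : ℂ => y + ∑' n : ℕ, ((q n : ℝ):ℂ) * y^(n+2)) y = G y :=
    fun y hy => (ml_hasDerivAt_f q hq hQ hy).deriv
  have hdd : deriv (deriv (fun y : ℂ => y + ∑' n : ℕ, ((q n : ℝ):ℂ) * y^(n+2))) z = H z := by
    have heq : deriv (fun y : ℂ => y + ∑' n : ℕ, ((q n : ℝ):ℂ) * y^(n+2)) =ᶠ[nhds z] G := by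
      filter_upwards [isOpen_ball.mem_nhds hz] with y hy using hd1 y hy
    rw [heq.deriv_eq]
    exact (ml_hasDerivAt_g q hq hQ hz).deriv
  rw [hdd, hd1 z hz]
  -- now the estimate
  set T : ℂ := ∑' n : ℕ, ((q n : ℝ):ℂ) * (((n:ℂ)+2) * z^(n+1)) with hTdef
  set A1 : ℝ := ∑' n : ℕ, ((n:ℝ)+2) * q n * ‖z‖^(n+1) with hA1def
  set A2 : ℝ := ∑' n : ℕ, ((n:ℝ)+2) * ((n:ℝ)+1) * q n * ‖z‖^(n+1) with hA2def
  have hzn : (0:ℝ) ≤ ‖z‖ := norm_nonneg z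
  have hA1sum : Summable (fun n : ℕ => ((n:ℝ)+2) * q n * ‖z‖^(n+1)) := by
    apply Summable.of_nonneg_of_le ?_ ?_ hQ
    · intro n; have h0 : (0:ℝ) ≤ n := n.cast_nonneg; have := hq n; positivity
    · intro n
      have h0 : (0:ℝ) ≤ n := n.cast_nonneg
      have := hq n
      have h1 : ‖z‖^(n+1) ≤ 1 := pow_le_one₀ hzn hz1.le
      have h2 : ((n:ℝ)+2) * q n * ‖z‖^(n+1) ≤ ((n:ℝ)+2) * q n :=
        le_of_le_of_eq (mul_le_mul_of_nonneg_left h1 (by positivity)) (mul_one _)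
      nlinarith [mul_nonneg h0 (hq n)]
  have hA2sum : Summable (fun n : ℕ => ((n:ℝ)+2) * ((n:ℝ)+1) * q n * ‖z‖^(n+1)) := by
    apply Summable.of_nonneg_of_le ?_ ?_ hQ
    · intro n; have h0 : (0:ℝ) ≤ n := n.cast_nonneg; have := hq n; positivity
    · intro n
      have h0 : (0:ℝ) ≤ n := n.cast_nonneg
      have := hq n
      have h1 : ‖z‖^(n+1) ≤ 1 := pow_le_one₀ hzn hz1.le
      have h2 : ((n:ℝ)+2) * ((n:ℝ)+1) * q n * ‖z‖^(n+1) ≤ ((n:ℝ)+2) * ((n:ℝ)+1) * q n :=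
        le_of_le_of_eq (mul_le_mul_of_nonneg_left h1 (by positivity)) (mul_one _)
      nlinarith [mul_nonneg h0 (hq n)]
  have hA1nn : 0 ≤ A1 := tsum_nonneg fun n => by
    have h0 : (0:ℝ) ≤ n := n.cast_nonneg; have := hq n; positivity
  have hA2nn : 0 ≤ A2 := tsum_nonneg fun n => by
    have h0 : (0:ℝ) ≤ n := n.cast_nonneg; have := hq n; positivity
  have hTA1 : ‖T‖ ≤ A1 := by
    rw [hTdef, hA1def]
    calc ‖∑' n : ℕ, ((q n : ℝ):ℂ) * (((n:ℂ)+2) * z^(n+1))‖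
        ≤ ∑' n : ℕ, ‖((q n : ℝ):ℂ) * (((n:ℂ)+2) * z^(n+1))‖ := by
          apply norm_tsum_le_tsum_norm
          apply hA1sum.congr
          intro n
          rw [ml_norm_term1 (q n) (hq n) n z]
      _ = ∑' n : ℕ, ((n:ℝ)+2) * q n * ‖z‖^(n+1) := by
          exact tsum_congr fun n => ml_norm_term1 (q n) (hq n) n z
  have hZH : ‖z * H z‖ ≤ A2 := by
    rw [norm_mul, hHdef, hA2def]
    have hHsum : Summable (fun n : ℕ => ((n:ℝ)+2) * ((n:ℝ)+1) * q n * ‖z‖^n) := by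
      apply Summable.of_nonneg_of_le ?_ ?_ hQ
      · intro n; have h0 : (0:ℝ) ≤ n := n.cast_nonneg; have := hq n; positivity
      · intro n
        have h0 : (0:ℝ) ≤ n := n.cast_nonneg
        have := hq n
        have h1 : ‖z‖^n ≤ 1 := pow_le_one₀ hzn hz1.le
        have h2 : ((n:ℝ)+2) * ((n:ℝ)+1) * q n * ‖z‖^n ≤ ((n:ℝ)+2) * ((n:ℝ)+1) * q n :=
          le_of_le_of_eq (mul_le_mul_of_nonneg_left h1 (by positivity)) (mul_one _)
        nlinarith [mul_nonneg h0 (hq n)]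
    calc ‖z‖ * ‖∑' n : ℕ, ((q n : ℝ):ℂ) * (((n:ℂ)+2) * (((n:ℂ)+1) * z^n))‖
        ≤ ‖z‖ * ∑' n : ℕ, ((n:ℝ)+2) * ((n:ℝ)+1) * q n * ‖z‖^n := by
          apply mul_le_mul_of_nonneg_left ?_ hzn
          calc ‖∑' n : ℕ, ((q n : ℝ):ℂ) * (((n:ℂ)+2) * (((n:ℂ)+1) * z^n))‖
              ≤ ∑' n : ℕ, ‖((q n : ℝ):ℂ) * (((n:ℂ)+2) * (((n:ℂ)+1) * z^n))‖ := by
                apply norm_tsum_le_tsum_norm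
                apply hHsum.congr
                intro n
                rw [ml_norm_term2 (q n) (hq n) n z]
            _ = _ := tsum_congr fun n => ml_norm_term2 (q n) (hq n) n z
      _ = ∑' n : ℕ, ((n:ℝ)+2) * ((n:ℝ)+1) * q n * ‖z‖^(n+1) := by
          rw [← tsum_mul_left]
          exact tsum_congr fun n => by ring
  have hA12 : A1 + A2 ≤ ‖z‖ := by
    rw [hA1def, hA2def, ← Summable.tsum_add hA1sum hA2sum]
    have hcomb : ∀ n : ℕ, ((n:ℝ)+2) * q n * ‖z‖^(n+1) + ((n:ℝ)+2) * ((n:ℝ)+1) * q n * ‖z‖^(n+1)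
        = ((n:ℝ)+2)^2 * q n * ‖z‖^(n+1) := fun n => by ring
    calc (∑' n : ℕ, (((n:ℝ)+2) * q n * ‖z‖^(n+1) + ((n:ℝ)+2) * ((n:ℝ)+1) * q n * ‖z‖^(n+1)))
        = ∑' n : ℕ, ((n:ℝ)+2)^2 * q n * ‖z‖^(n+1) := tsum_congr hcomb
      _ ≤ ∑' n : ℕ, ‖z‖ * (((n:ℝ)+2)^2 * q n) := by
          apply Summable.tsum_le_tsum ?_ ?_ (hQ.mul_left ‖z‖)
          · intro n
            have h0 : (0:ℝ) ≤ n := n.cast_nonneg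
            have := hq n
            have h1 : ‖z‖^n ≤ 1 := pow_le_one₀ hzn hz1.le
            calc ((n:ℝ)+2)^2 * q n * ‖z‖^(n+1) = (((n:ℝ)+2)^2 * q n * ‖z‖) * ‖z‖^n := by
                  rw [pow_succ]; ring
              _ ≤ (((n:ℝ)+2)^2 * q n * ‖z‖) * 1 :=
                  mul_le_mul_of_nonneg_left h1 (by positivity)
              _ = ‖z‖ * (((n:ℝ)+2)^2 * q n) := by ring
          · apply (hA1sum.add hA2sum).congr
            intro n
            rw [hcomb n]
      _ = ‖z‖ * ∑' n : ℕ, ((n:ℝ)+2)^2 * q n := tsum_mul_left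
      _ ≤ ‖z‖ * 1 := mul_le_mul_of_nonneg_left hK hzn
      _ = ‖z‖ := mul_one _
  have hA1lt : A1 < 1 := by linarith
  have hGlb : 1 - A1 ≤ ‖G z‖ := by
    have hGz : G z = 1 + T := rfl
    have h := norm_add_le (1 + T) (-T)
    simp only [add_neg_cancel_right, norm_neg, norm_one] at h
    rw [hGz]
    linarith
  have hGpos : 0 < ‖G z‖ := lt_of_lt_of_le (by linarith) hGlb
  have hGne : G z ≠ 0 := by
    intro h
    rw [h, norm_zero] at hGpos
    exact lt_irrefl 0 hGpos
  have hw : ‖z * H z / G z‖ < 1 := by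
    rw [norm_div, div_lt_one hGpos]
    calc ‖z * H z‖ ≤ A2 := hZH
      _ < 1 - A1 := by linarith
      _ ≤ ‖G z‖ := hGlb
  have habs : |(z * H z / G z).re| ≤ ‖z * H z / G z‖ := by
    exact Complex.abs_re_le_norm _
  have : (1 + z * H z / G z).re = 1 + (z * H z / G z).re := by
    simp [Complex.add_re, Complex.one_re]
  rw [this]
  have := abs_le.mp habs
  linarith


lemma ml_E_pos {p u v : ℝ} (hp : 1 ≤ p) (hu : 1 ≤ u) (hv0 : 0 < v) : 0 < mlE u v p := by
  have hp0 : (0:ℝ) < p := lt_of_lt_of_le one_pos hp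
  apply Summable.tsum_pos (ml_summable_simple hp hu hv0)
    (fun n => div_nonneg (by positivity) (ml_gamma_pos hu hv0 n).le) 0
  have := ml_gamma_pos hu hv0 0
  positivity

/-- **Corollary 4.3**: a sufficient condition for `ℱ(p,u,v)` to be convex. -/
theorem stmt_12 (p u v : ℝ) (hp : 1 ≤ p) (hu : 1 ≤ u) (hv : 2 < v)
    (hcond : 1 / mlE u v p *
        (1 / u ^ 2 * (mlE u (v - 2) p - 1 / Real.Gamma (v - 2)) +
          ((3 - 2 * v) / u ^ 2 + 2 / u) * (mlE u (v - 1) p - 1 / Real.Gamma (v - 1)) +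
          ((1 - v) ^ 2 / u ^ 2 + 2 * (1 - v) / u + 1) * (mlE u v p - 1 / Real.Gamma v))
        ≤ 1) :
    ∀ z ∈ ball (0 : ℂ) 1,
      0 < (1 + z * deriv (deriv (mlF p u v)) z / deriv (mlF p u v) z).re := by
  have hp0 : (0:ℝ) < p := lt_of_lt_of_le one_pos hp
  have hv0 : (0:ℝ) < v := by linarith
  have hE : 0 < mlE u v p := ml_E_pos hp hu hv0
  set q : ℕ → ℝ := fun n => p ^ (n + 1) / (mlE u v p * Real.Gamma (u * ((n : ℕ) + 1 : ℕ) + v))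
    with hqdef
  have hq : ∀ n, 0 ≤ q n := by
    intro n
    have := ml_gamma_pos hu hv0 (n + 1)
    rw [hqdef]
    positivity
  have hQeq : ∀ n : ℕ, ((n:ℝ)+2)^2 * q n
      = (1 / mlE u v p) * (((n:ℝ)+2)^2 * p ^ (n+1) / Real.Gamma (u * ((n : ℕ) + 1 : ℕ) + v)) := by
    intro n
    have hΓ := ml_gamma_pos hu hv0 (n + 1)
    rw [hqdef]
    field_simp
  have hQ : Summable fun n : ℕ => ((n:ℝ)+2)^2 * q n := by
    apply ((ml_summable_wshift hp hu hv0).mul_left (1 / mlE u v p)).congr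
    intro n
    rw [hQeq n]
  have hK : ∑' n : ℕ, ((n:ℝ)+2)^2 * q n ≤ 1 := by
    calc ∑' n : ℕ, ((n:ℝ)+2)^2 * q n
        = ∑' n : ℕ, (1 / mlE u v p) *
            (((n:ℝ)+2)^2 * p ^ (n+1) / Real.Gamma (u * ((n : ℕ) + 1 : ℕ) + v)) :=
          tsum_congr hQeq
      _ = (1 / mlE u v p) *
            ∑' n : ℕ, ((n:ℝ)+2)^2 * p ^ (n+1) / Real.Gamma (u * ((n : ℕ) + 1 : ℕ) + v) :=
          tsum_mul_left
      _ ≤ 1 := by rw [← ml_identity hp hu hv]; exact hcond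
  have hfeq0 : mlF p u v = fun y : ℂ => y + ∑' n : ℕ, ((q n : ℝ) : ℂ) * y ^ (n + 2) := by
    funext y
    rw [mlF, hqdef]
    congr 1
    apply tsum_congr
    intro n
    push_cast
    rfl
  rw [hfeq0]
  exact ml_convex q hq hQ hK
end

section
/- Let p ≥ 1, u ≥ 1 be real numbers, v > 1 a real number and δ ∈ ℂ \ {0}. If (1/E_{u,v}(p)) [ (1/u)(E_{u,v−1}(p) − 1/Γ(v−1)) + ((1−v)/u + 1)(E_{u,v}(p) − 1/Γ(v)) ] ≤ |δ|, then the function ℱ(p,u,v)(z) = z + Σ_{s=2}^∞ (p^{s−1}/(E_{u,v}(p) Γ(u(s−1)+v))) z^s belongs to ℛ(δ), i.e. Re{1 + (1/δ)(ℱ'(z) − 1)} > 0 for all z in the open unit disc. -/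
open Metric

set_option maxHeartbeats 1000000 in
lemma aux_summable (p u w : ℝ) (hp : 1 ≤ p) (hu : 1 ≤ u) (hw : 0 < w) :
    Summable (fun n : ℕ => ((n : ℝ) + 1) * p ^ n / Real.Gamma (u * n + w)) := by
  have hp0 : (0:ℝ) < p := by linarith
  have hGpos : ∀ n : ℕ, 0 < Real.Gamma (u * n + w) := by
    intro n
    apply Real.Gamma_pos_of_pos
    have : (0:ℝ) ≤ u * n := by positivity
    linarith
  apply summable_of_ratio_norm_eventually_le (r := 1/2) (by norm_num)
  rw [Filter.eventually_atTop]
  refine ⟨⌈4*p⌉₊ + 2, fun n hn => ?_⟩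
  have hn4 : 4 * p ≤ n := le_trans (Nat.le_ceil _) (by exact_mod_cast le_trans (Nat.le_add_right _ 2) hn)
  have hn2 : (2:ℝ) ≤ n := by
    have : 2 ≤ n := le_trans (Nat.le_add_left _ _) hn
    exact_mod_cast this
  have hxn : (n:ℝ) ≤ u * n + w := by
    have : (n:ℝ) ≤ u * n := le_mul_of_one_le_left (by positivity) hu
    linarith
  have hx0 : (0:ℝ) < u * n + w := by linarith
  have hxG : 0 < Real.Gamma (u * n + w) := hGpos n
  have hmono : (u * n + w) * Real.Gamma (u * n + w) ≤ Real.Gamma (u * n + w + u) := by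
    rw [← Real.Gamma_add_one hx0.ne']
    rcases eq_or_lt_of_le (by linarith : u * n + w + 1 ≤ u * n + w + u) with h | h
    · rw [h]
    · exact le_of_lt (Real.Gamma_strictMonoOn_Ici (by simp only [Set.mem_Ici]; linarith)
        (by simp only [Set.mem_Ici]; linarith) h)
  have hGxu : 0 < Real.Gamma (u * n + w + u) := Real.Gamma_pos_of_pos (by linarith)
  have hnorm : ∀ k : ℕ, ‖((k : ℝ) + 1) * p ^ k / Real.Gamma (u * k + w)‖
      = ((k : ℝ) + 1) * p ^ k / Real.Gamma (u * k + w) := by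
    intro k
    exact Real.norm_of_nonneg (by positivity)
  rw [hnorm, hnorm]
  rw [show u * ((n:ℕ)+1 : ℕ) + w = u * n + w + u by push_cast; ring,
    show (((n:ℕ)+1 : ℕ) : ℝ) + 1 = (n:ℝ) + 2 by push_cast; ring]
  calc ((n:ℝ) + 2) * p ^ (n+1) / Real.Gamma (u * n + w + u)
      ≤ ((n:ℝ) + 2) * p ^ (n+1) / ((u * n + w) * Real.Gamma (u * n + w)) := by
        gcongr <;> first | exact hmono | positivity
    _ ≤ 1/2 * (((n:ℝ) + 1) * p ^ n / Real.Gamma (u * n + w)) := by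
        rw [div_le_iff₀ (by positivity)]
        have key : 2 * p * ((n:ℝ) + 2) ≤ ((n:ℝ) + 1) * (u * n + w) := by nlinarith
        have h2 : 1/2 * (((n:ℝ) + 1) * p ^ n / Real.Gamma (u * n + w)) * ((u * n + w) * Real.Gamma (u * n + w))
            = 1/2 * (((n:ℝ) + 1) * (u * n + w)) * p ^ n := by field_simp
        rw [h2, pow_succ]
        have key2 : 2 * p * ((n:ℝ) + 2) * p ^ n ≤ ((n:ℝ) + 1) * (u * n + w) * p ^ n :=
          mul_le_mul_of_nonneg_right key (le_of_lt (pow_pos hp0 n))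
        nlinarith [key2]

set_option maxHeartbeats 2000000 in
/-- **Corollary 4.8**: a sufficient condition for `ℱ(p,u,v)` to belong to the class
`ℛ(δ)` of close-to-convex functions of complex order `δ`. -/
theorem stmt_17 (p u v : ℝ) (hp : 1 ≤ p) (hu : 1 ≤ u) (hv : 1 < v)
    (δ : ℂ) (hδ : δ ≠ 0)
    (hcond : 1 / mlE u v p *
        (1 / u * (mlE u (v - 1) p - 1 / Real.Gamma (v - 1)) +
          ((1 - v) / u + 1) * (mlE u v p - 1 / Real.Gamma v))
        ≤ ‖δ‖) :
    ∀ z ∈ ball (0 : ℂ) 1,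
      0 < (1 + (1 / δ) * (deriv (mlF p u v) z - 1)).re := by
  have hp0 : (0:ℝ) < p := by linarith
  have hu0 : (0:ℝ) < u := by linarith
  have hv0 : (0:ℝ) < v := by linarith
  have hGpos : ∀ w : ℝ, 0 < w → ∀ n : ℕ, 0 < Real.Gamma (u * n + w) := by
    intro w hw n
    apply Real.Gamma_pos_of_pos
    have : (0:ℝ) ≤ u * n := by positivity
    linarith
  -- summability facts
  have Sv1 : Summable (fun n : ℕ => ((n : ℝ) + 1) * p ^ n / Real.Gamma (u * n + v)) :=
    aux_summable p u v hp hu hv0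
  have Sw1 : Summable (fun n : ℕ => ((n : ℝ) + 1) * p ^ n / Real.Gamma (u * n + (v-1))) :=
    aux_summable p u (v-1) hp hu (by linarith)
  have Sv : Summable (fun n : ℕ => p ^ n / Real.Gamma (u * n + v)) := by
    refine Sv1.of_nonneg_of_le
      (fun n => div_nonneg (pow_pos hp0 n).le (hGpos v hv0 n).le) (fun n => ?_)
    apply div_le_div_of_nonneg_right _ (le_of_lt (hGpos v hv0 n))
    nlinarith [pow_pos hp0 n, Nat.cast_nonneg (α := ℝ) n]
  have Sw : Summable (fun n : ℕ => p ^ n / Real.Gamma (u * n + (v-1))) := by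
    refine Sw1.of_nonneg_of_le
      (fun n => div_nonneg (pow_pos hp0 n).le (hGpos (v-1) (by linarith) n).le) (fun n => ?_)
    apply div_le_div_of_nonneg_right _ (le_of_lt (hGpos (v-1) (by linarith) n))
    nlinarith [pow_pos hp0 n, Nat.cast_nonneg (α := ℝ) n]
  -- positivity of mlE
  have hE : 0 < mlE u v p := by
    have h0 : p ^ 0 / Real.Gamma (u * (0:ℕ) + v) ≤ mlE u v p :=
      Summable.le_tsum Sv 0 (fun j _ => by positivity)
    have : 0 < p ^ 0 / Real.Gamma (u * (0:ℕ) + v) := by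
      have := hGpos v hv0 0; positivity
    linarith
  set E := mlE u v p with hEdef
  set c : ℕ → ℝ := fun s => p ^ (s + 1) / (E * Real.Gamma (u * (s + 1) + v)) with hc
  have hGc : ∀ s : ℕ, 0 < Real.Gamma (u * ((s:ℝ) + 1) + v) := by
    intro s
    have h1 : 0 < Real.Gamma (u * ((s:ℕ)+1:ℕ) + v) := hGpos v hv0 (s+1)
    have h2 : u * (((s:ℕ)+1:ℕ):ℝ) + v = u * ((s:ℝ)+1) + v := by push_cast; ring
    rwa [h2] at h1
  have hcpos : ∀ s, 0 < c s := by
    intro s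
    have h1 := hGc s
    simp only [hc]
    positivity
  -- summability of (s+2) * c s
  have Sc2 : Summable (fun s : ℕ => ((s:ℝ) + 2) * c s) := by
    have h1 : Summable (fun s : ℕ => (((s+1:ℕ):ℝ) + 1) * p ^ (s+1) / Real.Gamma (u * (s+1:ℕ) + v)) :=
      (summable_nat_add_iff 1).2 Sv1
    have h2 := h1.mul_left (1/E)
    refine h2.congr (fun s => ?_)
    have hGs := hGc s
    simp only [hc]
    push_cast
    field_simp
    ring
  -- the key identity: sum equals the LHS of hcond
  have hSw' : Summable (fun s : ℕ => p ^ (s+1) / Real.Gamma (u * ((s:ℝ)+1) + v - 1)) := by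
    have h := (summable_nat_add_iff 1).2 Sw
    refine h.congr (fun s => ?_)
    congr 2
    push_cast
    ring
  have hSv' : Summable (fun s : ℕ => p ^ (s+1) / Real.Gamma (u * ((s:ℝ)+1) + v)) := by
    have h := (summable_nat_add_iff 1).2 Sv
    refine h.congr (fun s => ?_)
    congr 2
    push_cast
    ring
  have hA1 : ∑' s : ℕ, p ^ (s+1) / Real.Gamma (u * ((s:ℝ)+1) + v - 1)
      = mlE u (v-1) p - 1 / Real.Gamma (v-1) := by
    have h0 := Summable.tsum_eq_zero_add Sw
    have hm : mlE u (v-1) p = ∑' n : ℕ, p ^ n / Real.Gamma (u * n + (v-1)) := rfl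
    rw [hm, h0]
    have he : ∀ n : ℕ, p ^ (n+1) / Real.Gamma (u * (((n:ℕ)+1:ℕ):ℝ) + (v-1))
        = p ^ (n+1) / Real.Gamma (u * ((n:ℝ)+1) + v - 1) := by
      intro n; congr 2; push_cast; ring
    rw [tsum_congr he]
    simp only [Nat.cast_zero, mul_zero, zero_add, pow_zero]
    ring
  have hA2 : ∑' s : ℕ, p ^ (s+1) / Real.Gamma (u * ((s:ℝ)+1) + v)
      = mlE u v p - 1 / Real.Gamma v := by
    have h0 := Summable.tsum_eq_zero_add Sv
    have hm : mlE u v p = ∑' n : ℕ, p ^ n / Real.Gamma (u * n + v) := rfl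
    rw [hm, h0]
    have he : ∀ n : ℕ, p ^ (n+1) / Real.Gamma (u * (((n:ℕ)+1:ℕ):ℝ) + v)
        = p ^ (n+1) / Real.Gamma (u * ((n:ℝ)+1) + v) := by
      intro n; congr 2; push_cast; ring
    rw [tsum_congr he]
    simp only [Nat.cast_zero, mul_zero, zero_add, pow_zero]
    ring
  have hT : ∑' s : ℕ, ((s:ℝ) + 2) * c s
      = 1 / E * (1 / u * (mlE u (v - 1) p - 1 / Real.Gamma (v - 1)) +
          ((1 - v) / u + 1) * (mlE u v p - 1 / Real.Gamma v)) := by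
    have hterm : ∀ s : ℕ, ((s:ℝ) + 2) * c s
        = 1/E * ((1/u) * (p ^ (s+1) / Real.Gamma (u * ((s:ℝ)+1) + v - 1))
            + ((1-v)/u + 1) * (p ^ (s+1) / Real.Gamma (u * ((s:ℝ)+1) + v))) := by
      intro s
      have hx0 : (0:ℝ) < u * ((s:ℝ)+1) + v - 1 := by
        have h1 : (0:ℝ) ≤ u * s := by positivity
        nlinarith
      have hG1 : 0 < Real.Gamma (u * ((s:ℝ)+1) + v - 1) := Real.Gamma_pos_of_pos hx0
      have hG2 := hGc s
      have hg : Real.Gamma (u * ((s:ℝ)+1) + v) = (u * ((s:ℝ)+1) + v - 1) * Real.Gamma (u * ((s:ℝ)+1) + v - 1) := by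
        have h := Real.Gamma_add_one hx0.ne'
        rw [show u * ((s:ℝ)+1) + v - 1 + 1 = u * ((s:ℝ)+1) + v by ring] at h
        exact h
      simp only [hc]
      rw [show u * ((s:ℝ) + 1) + v = u * ((s:ℝ)+1) + v from rfl] at *
      rw [hg] at hG2 ⊢
      field_simp
      ring
    rw [tsum_congr hterm, tsum_mul_left]
    rw [Summable.tsum_add (hSw'.mul_left _) (hSv'.mul_left _), tsum_mul_left, tsum_mul_left, hA1, hA2]
  -- so T ≤ |δ|
  have hTle : ∑' s : ℕ, ((s:ℝ) + 2) * c s ≤ ‖δ‖ := by rw [hT]; exact hcond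
  -- derivative computation
  intro z hz
  rw [mem_ball, dist_zero_right] at hz
  set r : ℝ := (1 + ‖z‖) / 2 with hr
  have hzr : ‖z‖ < r := by rw [hr]; linarith [norm_nonneg z]
  have hr1 : r < 1 := by rw [hr]; linarith
  have hr0 : 0 < r := lt_of_le_of_lt (norm_nonneg z) hzr
  have hnormeq : ∀ (s : ℕ) (y : ℂ), ‖((c s : ℝ) : ℂ) * (((s:ℕ) + 2 : ℕ) * y ^ (s + 1))‖
      = c s * ((s:ℝ) + 2) * ‖y‖ ^ (s+1) := by
    intro s y
    rw [norm_mul, norm_mul, norm_pow, Complex.norm_real, Complex.norm_natCast,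
      Real.norm_of_nonneg (hcpos s).le]
    push_cast
    ring
  have hDeriv : HasDerivAt (fun w : ℂ => ∑' s : ℕ, ((c s : ℝ) : ℂ) * w ^ (s + 2))
      (∑' s : ℕ, ((c s : ℝ) : ℂ) * (((s:ℕ) + 2 : ℕ) * z ^ (s + 1))) z := by
    apply hasDerivAt_tsum_of_isPreconnected (u := fun s : ℕ => ((s:ℝ) + 2) * c s)
      (g := fun (s : ℕ) (w : ℂ) => ((c s : ℝ) : ℂ) * w ^ (s + 2))
      (g' := fun (s : ℕ) (w : ℂ) => ((c s : ℝ) : ℂ) * (((s:ℕ) + 2 : ℕ) * w ^ (s + 1)))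
      (y₀ := (0:ℂ)) (t := ball (0:ℂ) r)
      Sc2 isOpen_ball (convex_ball (0:ℂ) r).isPreconnected
    · intro n y _
      simpa using (hasDerivAt_pow (n+2) y).const_mul ((c n : ℝ) : ℂ)
    · intro n y hy
      rw [mem_ball, dist_zero_right] at hy
      have hy1 : ‖y‖ ≤ 1 := le_of_lt (lt_trans hy hr1)
      rw [hnormeq]
      have hcn : (0:ℝ) ≤ c n * ((n:ℝ) + 2) := by
        have := hcpos n
        positivity
      calc c n * ((n:ℝ) + 2) * ‖y‖ ^ (n+1) ≤ c n * ((n:ℝ) + 2) * 1 :=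
            mul_le_mul_of_nonneg_left (pow_le_one₀ (norm_nonneg y) hy1) hcn
        _ = ((n:ℝ) + 2) * c n := by ring
    · exact mem_ball_self hr0
    · refine summable_zero.congr (fun s => ?_)
      simp
    · rw [mem_ball, dist_zero_right]; exact hzr
  set D : ℂ := ∑' s : ℕ, ((c s : ℝ) : ℂ) * (((s:ℕ) + 2 : ℕ) * z ^ (s + 1)) with hD
  have hmlF : HasDerivAt (mlF p u v) (1 + D) z := by
    have hfun : mlF p u v = fun w : ℂ => w + ∑' s : ℕ, ((c s : ℝ) : ℂ) * w ^ (s + 2) := rfl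
    rw [hfun]
    exact (hasDerivAt_id z).add hDeriv
  rw [hmlF.deriv]
  -- bound ‖D‖ < |δ|
  have hbound : ∀ s : ℕ, ‖((c s : ℝ) : ℂ) * (((s:ℕ) + 2 : ℕ) * z ^ (s + 1))‖ ≤ ((s:ℝ) + 2) * c s := by
    intro s
    rw [hnormeq]
    have hcs : (0:ℝ) ≤ c s * ((s:ℝ) + 2) := by
      have := hcpos s
      positivity
    calc c s * ((s:ℝ) + 2) * ‖z‖ ^ (s+1) ≤ c s * ((s:ℝ) + 2) * 1 :=
          mul_le_mul_of_nonneg_left (pow_le_one₀ (norm_nonneg z) (le_of_lt hz)) hcs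
      _ = ((s:ℝ) + 2) * c s := by ring
  have hnormsum : Summable (fun s : ℕ => ‖((c s : ℝ) : ℂ) * (((s:ℕ) + 2 : ℕ) * z ^ (s + 1))‖) :=
    Sc2.of_nonneg_of_le (fun s => norm_nonneg _) hbound
  have hDlt : ‖D‖ < ‖δ‖ := by
    have h1 : ‖D‖ ≤ ∑' s : ℕ, ‖((c s : ℝ) : ℂ) * (((s:ℕ) + 2 : ℕ) * z ^ (s + 1))‖ :=
      norm_tsum_le_tsum_norm hnormsum
    have h2 : ∑' s : ℕ, ‖((c s : ℝ) : ℂ) * (((s:ℕ) + 2 : ℕ) * z ^ (s + 1))‖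
        < ∑' s : ℕ, ((s:ℝ) + 2) * c s := by
      apply Summable.tsum_lt_tsum_of_nonneg (i := 0) (fun s => norm_nonneg _) hbound _ Sc2
      rw [hnormeq]
      have hc0 := hcpos 0
      have hlt : c 0 * ((0:ℝ) + 2) * ‖z‖ ^ (0+1) < c 0 * ((0:ℝ) + 2) * 1 := by
        rcases eq_or_lt_of_le (norm_nonneg z) with h | h
        · rw [pow_one, ← h]; norm_num; positivity
        · rw [pow_one]
          exact (mul_lt_mul_iff_right₀ (by positivity)).2 hz
      calc c 0 * (((0:ℕ):ℝ) + 2) * ‖z‖ ^ (0+1) < c 0 * ((0:ℝ) + 2) * 1 := by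
            simpa using hlt
        _ = (((0:ℕ):ℝ) + 2) * c 0 := by norm_num; ring
    linarith
  -- conclude
  have hδ0 : 0 < ‖δ‖ := by
    simpa [AbsoluteValue.pos_iff] using hδ
  have hre : (1 + 1 / δ * (1 + D - 1)).re = 1 + (δ⁻¹ * D).re := by
    simp [one_div]
  rw [hre]
  have habs : ‖δ⁻¹ * D‖ < 1 := by
    rw [norm_mul, norm_inv]
    rw [inv_mul_lt_iff₀ hδ0, mul_one]
    simpa using hDlt
  have h2 : -(‖δ⁻¹ * D‖) ≤ (δ⁻¹ * D).re :=
    neg_abs_le _ |>.trans' (by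
      have := Complex.abs_re_le_norm (δ⁻¹ * D)
      linarith [abs_nonneg ((δ⁻¹ * D).re)])
  linarith
end
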